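/- arXiv:2107.12297 — 4 statements merged into one kernel-verified Lean document; each statement's English description precedes it below -/
import Mathlib

section
/- Let s > 0 with s not a positive integer and let u be a Schwartz function on ℝ. Then there exist constants c(s), C(s) > 0 depending only on s such that ∫_0^∞ ρ^{2s−1} |φ_{[s],0}(u, ρ)| dρ ≤ c(s) ‖u‖²_{Ḣ^s(ℝ)}, and for every R > 0, ‖u‖²_{Ḣ^s(ℝ)} ≤ C(s) ( ∫_R^∞ ρ^{2s−1} |φ_{[s],0}(u, ρ)| dρ + R^{2(s−[s])} ‖u‖²_{Ḣ^{[s]}(ℝ)} ). -/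
open MeasureTheory Complex

/-- The Fourier transform with normalization `û(ζ) = (2π)^{-1/2} ∫ e^{ixζ} u(x) dx`. -/
noncomputable def FT (u : ℝ → ℂ) (ζ : ℝ) : ℂ :=
  (Real.sqrt (2 * Real.pi) : ℂ)⁻¹ * ∫ x : ℝ, Complex.exp (Complex.I * x * ζ) * u x

/-- The squared homogeneous Sobolev seminorm `‖u‖²_{Ḣ^s} = ∫ |ζ|^{2s} |û(ζ)|² dζ`. -/
noncomputable def homSobNormSq (s : ℝ) (u : ℝ → ℂ) : ℝ :=
  ∫ ζ : ℝ, |ζ| ^ (2 * s) * ‖FT u ζ‖ ^ 2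

/-- `φ_{L,0}(u,ρ) = ((−1)^L/(2^{2L+1}ρ^{2L})) ∫ ζ^{2L+2}|û(ζ)|²/(ζ²+4ρ²) dζ`. -/
noncomputable def phiL0 (L : ℕ) (u : ℝ → ℂ) (ρ : ℝ) : ℝ :=
  ((-1 : ℝ) ^ L / (2 ^ (2 * L + 1) * ρ ^ (2 * L)))
    * ∫ ζ : ℝ, ζ ^ (2 * L + 2) * ‖FT u ζ‖ ^ 2 / (ζ ^ 2 + 4 * ρ ^ 2)

/-!
Write `g = |û|²`, `L = [s]` and `σ = s - L ∈ (0, 1)`. Then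
`ρ^{2s-1} |φ_{L,0}(u,ρ)| = 2^{-2L-1} ∫ ζ^{2L+2} g(ζ) ρ^{2σ-1} / (ζ² + 4ρ²) dζ`.
Integrating over `ρ > 0` first (Tonelli) and substituting `ρ = |ζ| t` turns the inner integral
into `|ζ|^{2σ-2} K(σ)` with `K(σ) = ∫₀^∞ t^{2σ-1} / (1 + 4t²) dt ∈ (0, ∞)`, so the weighted
integral of `|φ_{L,0}|` over `(0, ∞)` is exactly `2^{-2L-1} K(σ) ‖u‖²_{Ḣ^s}`.
For the second inequality split `(0, ∞)` at `R`: on `(0, R]` the bound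
`ζ^{2L+2} / (ζ² + 4ρ²) ≤ ζ^{2L}` controls the integral by `2^{-2L-1} R^{2σ} / (2σ) ‖u‖²_{Ḣ^L}`.
-/

open Real Set Filter Asymptotics FourierTransform
open scoped SchwartzMap

lemma FT_eq_fourier (u : ℝ → ℂ) (ζ : ℝ) :
    FT u ζ = (√(2 * π) : ℂ)⁻¹ * 𝓕 u (ζ * -(2 * π)⁻¹) := by
  rw [FT, Real.fourier_real_eq_integral_exp_smul]
  congr 2 with x
  rw [smul_eq_mul, show -2 * π * x * (ζ * -(2 * π)⁻¹) = x * ζ by field_simp]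
  push_cast
  ring_nf

noncomputable def fourierSchwartz (u : 𝓢(ℝ, ℂ)) : 𝓢(ℝ, ℂ) :=
  (√(2 * π) : ℂ)⁻¹ • SchwartzMap.compCLMOfContinuousLinearEquiv ℂ
    (ContinuousLinearEquiv.unitsEquivAut ℝ (Units.mk0 (-(2 * π)⁻¹) (by simp [pi_ne_zero]))) (𝓕 u)

lemma coe_fourierSchwartz (u : 𝓢(ℝ, ℂ)) : ⇑(fourierSchwartz u) = FT u := by
  ext ζ
  simp [fourierSchwartz, FT_eq_fourier, SchwartzMap.fourier_coe]

lemma abs_rpow_le_one_add_pow (x : ℝ) {a : ℝ} (ha : 0 ≤ a) : |x| ^ a ≤ 1 + |x| ^ ⌈a⌉₊ := by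
  rcases le_total |x| 1 with hx | hx
  · linarith [rpow_le_one (abs_nonneg x) hx ha, pow_nonneg (abs_nonneg x) ⌈a⌉₊]
  · calc |x| ^ a ≤ |x| ^ (⌈a⌉₊ : ℝ) := rpow_le_rpow_of_exponent_le hx (Nat.le_ceil a)
      _ ≤ 1 + |x| ^ ⌈a⌉₊ := by rw [rpow_natCast]; linarith

lemma SchwartzMap.integrable_abs_rpow_mul_norm_sq {V : Type*} [NormedAddCommGroup V]
    [NormedSpace ℝ V] (v : 𝓢(ℝ, V)) {a : ℝ} (ha : 0 ≤ a) :
    Integrable fun x : ℝ => |x| ^ a * ‖v x‖ ^ 2 := by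
  set M := SchwartzMap.seminorm ℝ 0 0 v
  have hbound : ∀ x : ℝ, ‖|x| ^ a * ‖v x‖ ^ 2‖ ≤ M * (‖x‖ ^ 0 * ‖v x‖ + ‖x‖ ^ ⌈a⌉₊ * ‖v x‖) := by
    intro x
    rw [norm_of_nonneg (by positivity), Real.norm_eq_abs]
    calc |x| ^ a * ‖v x‖ ^ 2 ≤ (1 + |x| ^ ⌈a⌉₊) * ‖v x‖ * M := by
          rw [sq, ← mul_assoc]
          gcongr
          exacts [abs_rpow_le_one_add_pow x ha, v.norm_le_seminorm ℝ x]
      _ = M * (|x| ^ 0 * ‖v x‖ + |x| ^ ⌈a⌉₊ * ‖v x‖) := by ring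
  refine Integrable.mono' (((v.integrable_pow_mul volume 0).add
    (v.integrable_pow_mul volume ⌈a⌉₊)).const_mul M) ?_ (Eventually.of_forall hbound)
  exact ((continuous_abs.rpow_const fun _ => Or.inr ha).mul
    (v.continuous.norm.pow 2)).aestronglyMeasurable

lemma integrable_abs_rpow_mul_norm_FT_sq (u : 𝓢(ℝ, ℂ)) {a : ℝ} (ha : 0 ≤ a) :
    Integrable fun ζ : ℝ => |ζ| ^ a * ‖FT u ζ‖ ^ 2 := by
  simpa only [coe_fourierSchwartz] using (fourierSchwartz u).integrable_abs_rpow_mul_norm_sq ha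

noncomputable def kernelConst (σ : ℝ) : ℝ :=
  ∫ t in Ioi 0, t ^ (2 * σ - 1) * (1 + 4 * t ^ 2)⁻¹

lemma integrableOn_kernel {σ : ℝ} (hσ₀ : 0 < σ) (hσ₁ : σ < 1) :
    IntegrableOn (fun t : ℝ => t ^ (2 * σ - 1) * (1 + 4 * t ^ 2)⁻¹) (Ioi 0) := by
  -- `(1 + 4t²)⁻¹` is `O(t⁻²)` at `∞` and `O(1)` at `0`, and `0 < 2σ < 2`.
  refine mellin_convergent_of_isBigO_scalar (a := 2) (b := 0)
    ((Continuous.inv₀ (by fun_prop) fun t => by positivity).locallyIntegrable.locallyIntegrableOn _)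
    ?_ (by linarith) ?_ (by linarith)
  · refine IsBigO.of_bound 1 ?_
    filter_upwards [eventually_gt_atTop 0] with t ht
    rw [norm_inv, norm_of_nonneg (by positivity), norm_of_nonneg (by positivity), rpow_neg ht.le,
      rpow_two, one_mul]
    exact inv_anti₀ (by positivity) (by linarith [sq_nonneg t])
  · refine IsBigO.of_bound 1 (Eventually.of_forall fun t => ?_)
    rw [neg_zero, rpow_zero, norm_one, one_mul, norm_inv, norm_of_nonneg (by positivity)]
    exact inv_le_one_of_one_le₀ (by nlinarith)

lemma kernelConst_pos {σ : ℝ} (hσ₀ : 0 < σ) (hσ₁ : σ < 1) : 0 < kernelConst σ := by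
  refine (setIntegral_pos_iff_support_of_nonneg_ae ?_ (integrableOn_kernel hσ₀ hσ₁)).2 ?_
  · filter_upwards [ae_restrict_mem measurableSet_Ioi] with t (ht : 0 < t)
    positivity
  · have : Function.support (fun t : ℝ => t ^ (2 * σ - 1) * (1 + 4 * t ^ 2)⁻¹) ∩ Ioi 0 = Ioi 0 :=
      inter_eq_right.2 fun t (ht : 0 < t) => (by positivity : (0 : ℝ) < _).ne'
    rw [this]; simp

lemma lintegral_Ioi_kernel {σ z : ℝ} (hσ₀ : 0 < σ) (hσ₁ : σ < 1) (hz : 0 < z) :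
    ∫⁻ ρ in Ioi 0, ENNReal.ofReal (ρ ^ (2 * σ - 1) * (z ^ 2 + 4 * ρ ^ 2)⁻¹)
      = ENNReal.ofReal (z ^ (2 * σ - 2) * kernelConst σ) := by
  set k : ℝ → ℝ := fun t => t ^ (2 * σ - 1) * (1 + 4 * t ^ 2)⁻¹
  have hscale : ∀ ρ ∈ Ioi (0 : ℝ),
      ρ ^ (2 * σ - 1) * (z ^ 2 + 4 * ρ ^ 2)⁻¹ = z ^ (2 * σ - 3) * k (z⁻¹ * ρ) := by
    intro ρ (hρ : 0 < ρ)
    have h3 : z ^ (2 * σ - 3) = z ^ (2 * σ - 1) / z ^ 2 := by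
      rw [show 2 * σ - 3 = 2 * σ - 1 - 2 by ring, rpow_sub hz, rpow_two]
    simp only [k]
    rw [mul_rpow (inv_nonneg.2 hz.le) hρ.le, inv_rpow hz.le, h3]
    have : z ^ (2 * σ - 1) ≠ 0 := by positivity
    field_simp
  have hint : IntegrableOn (fun ρ => z ^ (2 * σ - 3) * k (z⁻¹ * ρ)) (Ioi 0) := by
    have hk : IntegrableOn (fun ρ => k (z⁻¹ * ρ)) (Ioi 0) := by
      rw [integrableOn_Ioi_comp_mul_left_iff k 0 (inv_pos.2 hz), mul_zero]
      exact integrableOn_kernel hσ₀ hσ₁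
    exact hk.const_mul _
  rw [setLIntegral_congr_fun measurableSet_Ioi fun ρ hρ => by rw [hscale ρ hρ],
    ← ofReal_integral_eq_lintegral_ofReal hint, integral_const_mul,
    integral_comp_mul_left_Ioi k 0 (inv_pos.2 hz), mul_zero, inv_inv, smul_eq_mul, ← mul_assoc,
    mul_comm _ z, ← rpow_one_add' hz.le (by linarith)]
  · rw [show 1 + (2 * σ - 3) = 2 * σ - 2 by ring, kernelConst]
  · filter_upwards [ae_restrict_mem measurableSet_Ioi] with ρ (hρ : 0 < ρ)
    rw [← hscale ρ hρ]; positivity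

noncomputable def phiL0Integrand (L : ℕ) (s : ℝ) (u : ℝ → ℂ) (ρ ζ : ℝ) : ℝ :=
  ((2 : ℝ) ^ (2 * L + 1))⁻¹ * ζ ^ (2 * L + 2) * ‖FT u ζ‖ ^ 2
    * (ρ ^ (2 * (s - L) - 1) * (ζ ^ 2 + 4 * ρ ^ 2)⁻¹)

lemma pow_two_mul_add_two_nonneg (L : ℕ) (ζ : ℝ) : 0 ≤ ζ ^ (2 * L + 2) :=
  Even.pow_nonneg ⟨L + 1, by ring⟩ ζ

section
variable (L : ℕ) (s : ℝ) (u : ℝ → ℂ)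

lemma rpow_mul_abs_phiL0 {ρ : ℝ} (hρ : 0 < ρ) :
    ρ ^ (2 * s - 1) * |phiL0 L u ρ| = ∫ ζ, phiL0Integrand L s u ρ ζ := by
  have hI : 0 ≤ ∫ ζ : ℝ, ζ ^ (2 * L + 2) * ‖FT u ζ‖ ^ 2 / (ζ ^ 2 + 4 * ρ ^ 2) :=
    integral_nonneg fun ζ =>
      div_nonneg (mul_nonneg (pow_two_mul_add_two_nonneg L ζ) (by positivity)) (by positivity)
  have hρs : ρ ^ (2 * s - 1) = ρ ^ (2 * (s - L) - 1) * ρ ^ (2 * L) := by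
    rw [← rpow_natCast, ← rpow_add hρ]; push_cast; ring_nf
  have hF : phiL0Integrand L s u ρ = fun ζ => ((2 : ℝ) ^ (2 * L + 1))⁻¹ * ρ ^ (2 * (s - L) - 1)
      * (ζ ^ (2 * L + 2) * ‖FT u ζ‖ ^ 2 / (ζ ^ 2 + 4 * ρ ^ 2)) := by
    ext ζ; simp only [phiL0Integrand]; ring
  rw [hF, integral_const_mul, phiL0, abs_mul, abs_of_nonneg hI, abs_div, abs_pow, abs_neg, abs_one,
    one_pow, abs_of_pos (by positivity), hρs]
  field_simp

lemma phiL0Integrand_nonneg {ρ : ℝ} (hρ : 0 ≤ ρ) (ζ : ℝ) : 0 ≤ phiL0Integrand L s u ρ ζ :=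
  mul_nonneg (mul_nonneg (mul_nonneg (by positivity) (pow_two_mul_add_two_nonneg L ζ))
    (by positivity)) (by positivity)

lemma phiL0Integrand_le {ρ : ℝ} (hρ : 0 ≤ ρ) (ζ : ℝ) :
    phiL0Integrand L s u ρ ζ
      ≤ ((2 : ℝ) ^ (2 * L + 1))⁻¹ * ρ ^ (2 * (s - L) - 1)
          * (|ζ| ^ (2 * (L : ℝ)) * ‖FT u ζ‖ ^ 2) := by
  have hζ : ζ ^ (2 * L + 2) * (ζ ^ 2 + 4 * ρ ^ 2)⁻¹ ≤ |ζ| ^ (2 * (L : ℝ)) := by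
    rw [show 2 * (L : ℝ) = (2 * L : ℕ) by push_cast; ring, rpow_natCast,
      (even_two_mul L).pow_abs, pow_add]
    rcases (add_nonneg (sq_nonneg ζ) (by positivity : 0 ≤ 4 * ρ ^ 2)).eq_or_lt with h | h
    · rw [← h, inv_zero, mul_zero]; exact (even_two_mul L).pow_nonneg ζ
    · rw [mul_assoc, ← div_eq_mul_inv]
      refine mul_le_of_le_one_right ((even_two_mul L).pow_nonneg ζ) ((div_le_one h).2 ?_)
      nlinarith
  calc phiL0Integrand L s u ρ ζ
      = ((2 : ℝ) ^ (2 * L + 1))⁻¹ * ρ ^ (2 * (s - L) - 1) * ‖FT u ζ‖ ^ 2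
          * (ζ ^ (2 * L + 2) * (ζ ^ 2 + 4 * ρ ^ 2)⁻¹) := by unfold phiL0Integrand; ring
    _ ≤ ((2 : ℝ) ^ (2 * L + 1))⁻¹ * ρ ^ (2 * (s - L) - 1) * ‖FT u ζ‖ ^ 2 * |ζ| ^ (2 * (L : ℝ)) :=
        mul_le_mul_of_nonneg_left hζ (by positivity)
    _ = _ := by ring

lemma measurable_phiL0Integrand (hFT : Measurable (FT u)) :
    Measurable (Function.uncurry (phiL0Integrand L s u)) := by
  unfold phiL0Integrand Function.uncurry
  fun_prop

lemma integrable_phiL0Integrand (hFT : Measurable (FT u))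
    (hL : Integrable fun ζ => |ζ| ^ (2 * (L : ℝ)) * ‖FT u ζ‖ ^ 2) {ρ : ℝ} (hρ : 0 ≤ ρ) :
    Integrable (phiL0Integrand L s u ρ) :=
  (hL.const_mul _).mono'
    ((measurable_phiL0Integrand L s u hFT).comp measurable_prodMk_left).aestronglyMeasurable
    (Eventually.of_forall fun ζ => by
      rw [Real.norm_of_nonneg (phiL0Integrand_nonneg L s u hρ ζ)]
      exact phiL0Integrand_le L s u hρ ζ)

lemma lintegral_Ioi_phiL0Integrand (hsL₀ : (L : ℝ) < s) (hsL₁ : s < L + 1) {ζ : ℝ} (hζ : ζ ≠ 0) :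
    ∫⁻ ρ in Ioi 0, ENNReal.ofReal (phiL0Integrand L s u ρ ζ)
      = ENNReal.ofReal (((2 : ℝ) ^ (2 * L + 1))⁻¹ * kernelConst (s - L)
          * (|ζ| ^ (2 * s) * ‖FT u ζ‖ ^ 2)) := by
  have hσ₀ : 0 < s - L := by linarith
  have hσ₁ : s - L < 1 := by linarith
  have ha : 0 ≤ ((2 : ℝ) ^ (2 * L + 1))⁻¹ * ζ ^ (2 * L + 2) * ‖FT u ζ‖ ^ 2 :=
    mul_nonneg (mul_nonneg (by positivity) (pow_two_mul_add_two_nonneg L ζ)) (by positivity)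
  have hζs : ζ ^ (2 * L + 2) * |ζ| ^ (2 * (s - L) - 2) = |ζ| ^ (2 * s) := by
    rw [← Even.pow_abs ⟨L + 1, by ring⟩, ← rpow_natCast,
      ← rpow_add (abs_pos.2 hζ)]
    push_cast; ring_nf
  simp only [phiL0Integrand, ENNReal.ofReal_mul ha, ← sq_abs ζ]
  rw [lintegral_const_mul' _ _ ENNReal.ofReal_ne_top,
    lintegral_Ioi_kernel hσ₀ hσ₁ (abs_pos.2 hζ), ← ENNReal.ofReal_mul ha]
  congr 1
  linear_combination ((2 : ℝ) ^ (2 * L + 1))⁻¹ * ‖FT u ζ‖ ^ 2 * kernelConst (s - L) * hζs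

lemma lintegral_rpow_mul_abs_phiL0 (hFT : Measurable (FT u))
    (hL : Integrable fun ζ => |ζ| ^ (2 * (L : ℝ)) * ‖FT u ζ‖ ^ 2)
    (hs : Integrable fun ζ => |ζ| ^ (2 * s) * ‖FT u ζ‖ ^ 2)
    (hsL₀ : (L : ℝ) < s) (hsL₁ : s < L + 1) :
    ∫⁻ ρ in Ioi 0, ENNReal.ofReal (ρ ^ (2 * s - 1) * |phiL0 L u ρ|)
      = ENNReal.ofReal (((2 : ℝ) ^ (2 * L + 1))⁻¹ * kernelConst (s - L) * homSobNormSq s u) := by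
  have hc : 0 ≤ ((2 : ℝ) ^ (2 * L + 1))⁻¹ * kernelConst (s - L) :=
    mul_nonneg (by positivity) (kernelConst_pos (by linarith) (by linarith)).le
  have hinner : ∀ ρ ∈ Ioi (0 : ℝ), ENNReal.ofReal (ρ ^ (2 * s - 1) * |phiL0 L u ρ|)
      = ∫⁻ ζ, ENNReal.ofReal (phiL0Integrand L s u ρ ζ) := fun ρ (hρ : 0 < ρ) => by
    rw [rpow_mul_abs_phiL0 L s u hρ, ofReal_integral_eq_lintegral_ofReal
      (integrable_phiL0Integrand L s u hFT hL hρ.le)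
      (Eventually.of_forall (phiL0Integrand_nonneg L s u hρ.le))]
  rw [setLIntegral_congr_fun measurableSet_Ioi hinner,
    lintegral_lintegral_swap (measurable_phiL0Integrand L s u hFT).ennreal_ofReal.aemeasurable,
    homSobNormSq, ← integral_const_mul, ofReal_integral_eq_lintegral_ofReal (hs.const_mul _)
      (Eventually.of_forall fun ζ => mul_nonneg hc (by positivity))]
  exact lintegral_congr_ae <| (volume.ae_ne 0).mono fun ζ hζ =>
    lintegral_Ioi_phiL0Integrand L s u hsL₀ hsL₁ hζ

lemma rpow_mul_abs_phiL0_le (hL : Integrable fun ζ => |ζ| ^ (2 * (L : ℝ)) * ‖FT u ζ‖ ^ 2)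
    {ρ : ℝ} (hρ : 0 < ρ) :
    ρ ^ (2 * s - 1) * |phiL0 L u ρ|
      ≤ ((2 : ℝ) ^ (2 * L + 1))⁻¹ * homSobNormSq L u * ρ ^ (2 * (s - L) - 1) := by
  rw [rpow_mul_abs_phiL0 L s u hρ, homSobNormSq, mul_right_comm, ← integral_const_mul]
  exact integral_mono_of_nonneg (Eventually.of_forall (phiL0Integrand_nonneg L s u hρ.le))
    (hL.const_mul _) (Eventually.of_forall (phiL0Integrand_le L s u hρ.le))

lemma aestronglyMeasurable_rpow_mul_abs_phiL0 (hFT : Measurable (FT u)) :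
    AEStronglyMeasurable (fun ρ => ρ ^ (2 * s - 1) * |phiL0 L u ρ|) (volume.restrict (Ioi 0)) :=
  (measurable_phiL0Integrand L s u hFT).stronglyMeasurable.integral_prod_right'
    |>.aestronglyMeasurable.congr <| (ae_restrict_iff' measurableSet_Ioi).2 <|
      Eventually.of_forall fun _ hρ => (rpow_mul_abs_phiL0 L s u hρ).symm

lemma integrableOn_rpow_mul_abs_phiL0 (hFT : Measurable (FT u))
    (hL : Integrable fun ζ => |ζ| ^ (2 * (L : ℝ)) * ‖FT u ζ‖ ^ 2)
    (hs : Integrable fun ζ => |ζ| ^ (2 * s) * ‖FT u ζ‖ ^ 2)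
    (hsL₀ : (L : ℝ) < s) (hsL₁ : s < L + 1) :
    IntegrableOn (fun ρ => ρ ^ (2 * s - 1) * |phiL0 L u ρ|) (Ioi 0) := by
  refine ⟨aestronglyMeasurable_rpow_mul_abs_phiL0 L s u hFT, (hasFiniteIntegral_iff_ofReal
    ((ae_restrict_mem measurableSet_Ioi).mono fun ρ (hρ : 0 < ρ) => by positivity)).2 ?_⟩
  rw [lintegral_rpow_mul_abs_phiL0 L s u hFT hL hs hsL₀ hsL₁]
  exact ENNReal.ofReal_lt_top

lemma integral_rpow_mul_abs_phiL0 (hFT : Measurable (FT u))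
    (hL : Integrable fun ζ => |ζ| ^ (2 * (L : ℝ)) * ‖FT u ζ‖ ^ 2)
    (hs : Integrable fun ζ => |ζ| ^ (2 * s) * ‖FT u ζ‖ ^ 2)
    (hsL₀ : (L : ℝ) < s) (hsL₁ : s < L + 1) :
    ∫ ρ in Ioi 0, ρ ^ (2 * s - 1) * |phiL0 L u ρ|
      = ((2 : ℝ) ^ (2 * L + 1))⁻¹ * kernelConst (s - L) * homSobNormSq s u := by
  rw [integral_eq_lintegral_of_nonneg_ae
      ((ae_restrict_mem measurableSet_Ioi).mono fun ρ (hρ : 0 < ρ) => by positivity)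
      (aestronglyMeasurable_rpow_mul_abs_phiL0 L s u hFT),
    lintegral_rpow_mul_abs_phiL0 L s u hFT hL hs hsL₀ hsL₁, ENNReal.toReal_ofReal]
  exact mul_nonneg (mul_nonneg (by positivity) (kernelConst_pos (by linarith) (by linarith)).le)
    (integral_nonneg fun ζ => by positivity)

lemma setIntegral_Ioc_rpow_mul_abs_phiL0_le
    (hL : Integrable fun ζ => |ζ| ^ (2 * (L : ℝ)) * ‖FT u ζ‖ ^ 2)
    (hint : IntegrableOn (fun ρ => ρ ^ (2 * s - 1) * |phiL0 L u ρ|) (Ioi 0))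
    (hsL₀ : (L : ℝ) < s) {R : ℝ} (hR : 0 < R) :
    ∫ ρ in Ioc 0 R, ρ ^ (2 * s - 1) * |phiL0 L u ρ|
      ≤ ((2 : ℝ) ^ (2 * L + 1))⁻¹ / (2 * (s - L)) * (R ^ (2 * (s - L)) * homSobNormSq L u) := by
  have hpow : IntegrableOn (fun ρ : ℝ => ρ ^ (2 * (s - L) - 1)) (Ioc 0 R) :=
    (intervalIntegrable_iff_integrableOn_Ioc_of_le hR.le).1
      (intervalIntegral.intervalIntegrable_rpow' (by linarith))
  refine (setIntegral_mono_on (hint.mono_set Ioc_subset_Ioi_self) (hpow.const_mul _)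
    measurableSet_Ioc fun ρ hρ => rpow_mul_abs_phiL0_le L s u hL hρ.1).trans_eq ?_
  rw [integral_const_mul, ← intervalIntegral.integral_of_le hR.le,
    integral_rpow (Or.inl (by linarith)), sub_add_cancel, zero_rpow (by linarith), sub_zero]
  ring

lemma mul_homSobNormSq_le_setIntegral_Ioi_add (hFT : Measurable (FT u))
    (hL : Integrable fun ζ => |ζ| ^ (2 * (L : ℝ)) * ‖FT u ζ‖ ^ 2)
    (hs : Integrable fun ζ => |ζ| ^ (2 * s) * ‖FT u ζ‖ ^ 2)
    (hsL₀ : (L : ℝ) < s) (hsL₁ : s < L + 1) {R : ℝ} (hR : 0 < R) :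
    ((2 : ℝ) ^ (2 * L + 1))⁻¹ * kernelConst (s - L) * homSobNormSq s u
      ≤ (∫ ρ in Ioi R, ρ ^ (2 * s - 1) * |phiL0 L u ρ|)
        + ((2 : ℝ) ^ (2 * L + 1))⁻¹ / (2 * (s - L)) * (R ^ (2 * (s - L)) * homSobNormSq L u) := by
  have hint := integrableOn_rpow_mul_abs_phiL0 L s u hFT hL hs hsL₀ hsL₁
  rw [← integral_rpow_mul_abs_phiL0 L s u hFT hL hs hsL₀ hsL₁, ← Ioc_union_Ioi_eq_Ioi hR.le,
    setIntegral_union (Ioc_disjoint_Ioi le_rfl) measurableSet_Ioi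
      (hint.mono_set Ioc_subset_Ioi_self) (hint.mono_set (Ioi_subset_Ioi hR.le)), add_comm]
  exact add_le_add_right (setIntegral_Ioc_rpow_mul_abs_phiL0_le L s u hL hint hsL₀ hR) _

end

lemma natCast_floor_lt {s : ℝ} (hs : 0 < s) (hns : ∀ n : ℕ, 0 < n → s ≠ n) : (⌊s⌋₊ : ℝ) < s := by
  rcases Nat.eq_zero_or_pos ⌊s⌋₊ with h0 | hpos
  · simpa [h0] using hs
  · exact (Nat.floor_le hs.le).lt_of_ne (hns _ hpos).symm

/-- Lemma 2 of the paper: for noninteger `s > 0`, the weighted integral of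
`|φ_{[s],0}(u,ρ)|` is comparable to the homogeneous `Ḣ^s` seminorm squared, with
constants depending only on `s`. -/
theorem phiL0_comparison_Hs (s : ℝ) (hs : 0 < s) (hns : ∀ n : ℕ, 0 < n → s ≠ n) :
    ∃ c : ℝ, 0 < c ∧ ∃ C : ℝ, 0 < C ∧ ∀ u : SchwartzMap ℝ ℂ,
      ((∫ ρ in Set.Ioi (0 : ℝ), ρ ^ (2 * s - 1) * |phiL0 ⌊s⌋₊ (⇑u) ρ|)
          ≤ c * homSobNormSq s (⇑u)) ∧
      (∀ R : ℝ, 0 < R →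
        homSobNormSq s (⇑u)
          ≤ C * ((∫ ρ in Set.Ioi R, ρ ^ (2 * s - 1) * |phiL0 ⌊s⌋₊ (⇑u) ρ|)
              + R ^ (2 * (s - ⌊s⌋₊)) * homSobNormSq (⌊s⌋₊ : ℝ) (⇑u))) := by
  have hsL₀ := natCast_floor_lt hs hns
  have hsL₁ := Nat.lt_floor_add_one s
  set L := ⌊s⌋₊
  have hc : 0 < ((2 : ℝ) ^ (2 * L + 1))⁻¹ * kernelConst (s - L) :=
    mul_pos (by positivity) (kernelConst_pos (by linarith) (by linarith))
  have ha : 0 ≤ ((2 : ℝ) ^ (2 * L + 1))⁻¹ / (2 * (s - L)) :=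
    div_nonneg (by positivity) (by linarith)
  refine ⟨_, hc, _, mul_pos (inv_pos.2 hc) (by linarith :
    0 < 1 + ((2 : ℝ) ^ (2 * L + 1))⁻¹ / (2 * (s - L))), fun u => ?_⟩
  have hFT : Measurable (FT u) := coe_fourierSchwartz u ▸ (fourierSchwartz u).continuous.measurable
  have hL := integrable_abs_rpow_mul_norm_FT_sq u (a := 2 * L) (by positivity)
  have hs' := integrable_abs_rpow_mul_norm_FT_sq u (a := 2 * s) (by positivity)
  refine ⟨(integral_rpow_mul_abs_phiL0 L s u hFT hL hs' hsL₀ hsL₁).le, fun R hR => ?_⟩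
  have hTR : 0 ≤ ∫ ρ in Ioi R, ρ ^ (2 * s - 1) * |phiL0 L u ρ| :=
    setIntegral_nonneg measurableSet_Ioi fun ρ (hρ : R < ρ) => by
      have := hR.trans hρ; positivity
  have hHL : 0 ≤ R ^ (2 * (s - L)) * homSobNormSq L u :=
    mul_nonneg (by positivity) (integral_nonneg fun ζ => by positivity)
  rw [mul_assoc, ← div_eq_inv_mul, le_div_iff₀' hc]
  nlinarith [mul_nonneg ha hTR,
    mul_homSobNormSq_le_setIntegral_Ioi_add L s u hFT hL hs' hsL₀ hsL₁ hR]
end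

section
/- Fix δ ∈ (0, π/2). For all real numbers 0 ≤ α₁ ≤ α₂ ≤ 1 there exists a constant C = C(α₂ − α₁, δ) > 0 such that for every λ ∈ Γ_δ, every choice of sign ±, and every Schwartz function u on ℝ: ∫_ℝ |ζ|^{2+2α₁} |û(ζ)|² / |ζ ± 2λ²|² dζ ≤ C (2 Im(λ²))^{−2(α₂−α₁)} ∫_ℝ |ζ|^{2α₂} |û(ζ)|² dζ. -/
open MeasureTheory Complex

/-- The sector `Γ_δ = {λ ∈ ℂ : Im(λ²) > 0, δ < arg(λ²) < π − δ}`. -/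
def GammaSet (δ : ℝ) : Set ℂ :=
  {l : ℂ | 0 < (l ^ 2).im ∧ δ < (l ^ 2).arg ∧ (l ^ 2).arg < Real.pi - δ}

/-! Write `z = ζ ± 2λ²` and `m = 2 Im λ² = |Im z|`, so `|z| ≥ m`. Since `±2λ²` lies in the double
sector `|Im w| ≥ sin δ · |w|`, whose distance to the real point `-ζ` is `sin δ · |ζ|`, also
`|z| ≥ sin δ · |ζ|`. Interpolating these two bounds with weights `1 - β` and `β = α₂ - α₁` gives
`|z|² ≥ sin² δ · |ζ|^(2-2β) m^(2β)`, i.e. pointwise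
`|ζ|^(2+2α₁) / |z|² ≤ sin⁻² δ · m^(-2β) |ζ|^(2α₂)`. Integrating against `|û|²` proves the bound;
the right-hand side is a genuine (finite) integral because `û` is again a Schwartz function. -/

open scoped SchwartzMap FourierTransform

lemma Real.rpow_le_one_add_pow {x p : ℝ} (hx : 0 ≤ x) (hp : 0 ≤ p) {n : ℕ} (hn : p ≤ n) :
    x ^ p ≤ 1 + x ^ n := by
  rcases le_total x 1 with h | h
  · linarith [Real.rpow_le_one hx h hp, pow_nonneg hx n]
  · rw [← Real.rpow_natCast]
    linarith [Real.rpow_le_rpow_of_exponent_le h hn]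

namespace SchwartzMap

variable {D V : Type*} [NormedAddCommGroup D] [NormedSpace ℝ D] [MeasurableSpace D]
  [BorelSpace D] [SecondCountableTopology D] [NormedAddCommGroup V] [NormedSpace ℝ V]
  {μ : Measure D} [μ.HasTemperateGrowth]

lemma integrable_rpow_mul_norm_sq (f : 𝓢(D, V)) {p : ℝ} (hp : 0 ≤ p) :
    Integrable (fun x ↦ ‖x‖ ^ p * ‖f x‖ ^ 2) μ := by
  set B := SchwartzMap.seminorm ℝ 0 0 f
  have hB : ∀ x, ‖f x‖ ≤ B := fun x ↦ by simpa using f.norm_le_seminorm ℝ x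
  refine (((f.integrable_pow_mul μ 0).add (f.integrable_pow_mul μ ⌈p⌉₊)).const_mul B).mono'
    (by fun_prop) (Filter.Eventually.of_forall fun x ↦ ?_)
  have hpow := Real.rpow_le_one_add_pow (norm_nonneg x) hp (Nat.le_ceil p)
  have hsq : ‖f x‖ ^ 2 ≤ B * ‖f x‖ := by nlinarith [hB x, norm_nonneg (f x)]
  rw [Real.norm_of_nonneg (by positivity)]
  calc ‖x‖ ^ p * ‖f x‖ ^ 2 ≤ (1 + ‖x‖ ^ ⌈p⌉₊) * (B * ‖f x‖) := by gcongr
    _ = _ := by simp only [Pi.add_apply, pow_zero]; ring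

end SchwartzMap

lemma FT_eq_fourierInv (u : ℝ → ℂ) (ζ : ℝ) :
    FT u ζ = (Real.sqrt (2 * Real.pi) : ℂ)⁻¹ * 𝓕⁻ u (ζ * (2 * Real.pi)⁻¹) := by
  rw [FT, Real.fourierInv_eq']
  congr 2 with x
  simp only [RCLike.inner_apply, conj_trivial, smul_eq_mul]
  have : 2 * Real.pi * (ζ * (2 * Real.pi)⁻¹ * x) = x * ζ := by
    field_simp
  rw [this]
  push_cast
  ring_nf

lemma exists_schwartzMap_eq_FT (u : 𝓢(ℝ, ℂ)) : ∃ w : 𝓢(ℝ, ℂ), ∀ ζ, FT u ζ = w ζ := by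
  let scale := ContinuousLinearEquiv.unitsEquivAut ℝ (Units.mk0 (2 * Real.pi)⁻¹ (by positivity))
  refine ⟨(Real.sqrt (2 * Real.pi) : ℂ)⁻¹ •
    SchwartzMap.compCLMOfContinuousLinearEquiv ℂ scale (𝓕⁻ u), fun ζ ↦ ?_⟩
  simp [FT_eq_fourierInv, scale, SchwartzMap.fourierInv_coe]

lemma Real.sin_le_sin_of_lt_of_lt_pi_sub {δ θ : ℝ} (hδ : 0 ≤ δ) (h₁ : δ < θ)
    (h₂ : θ < Real.pi - δ) : Real.sin δ ≤ Real.sin θ := by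
  rcases le_total θ (Real.pi / 2) with h | h
  · exact Real.sin_le_sin_of_le_of_le_pi_div_two (by linarith) h h₁.le
  · rw [← Real.sin_pi_sub θ]
    exact Real.sin_le_sin_of_le_of_le_pi_div_two (by linarith) (by linarith) (by linarith)

lemma sin_mul_norm_le_im_of_mem_GammaSet {δ : ℝ} (hδ : 0 ≤ δ) {l : ℂ} (hl : l ∈ GammaSet δ) :
    Real.sin δ * ‖l ^ 2‖ ≤ (l ^ 2).im := by
  obtain ⟨him, harg₁, harg₂⟩ := hl
  have hnorm : 0 < ‖l ^ 2‖ := norm_pos_iff.mpr fun h ↦ by simp [h] at him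
  have := Real.sin_le_sin_of_lt_of_lt_pi_sub hδ harg₁ harg₂
  rwa [Complex.sin_arg, le_div_iff₀ hnorm] at this

lemma mul_abs_le_norm_ofReal_add {c : ℝ} {μ : ℂ} (hc₀ : 0 ≤ c) (hc₁ : c ≤ 1)
    (hμ : c * ‖μ‖ ≤ |μ.im|) (ζ : ℝ) : c * |ζ| ≤ ‖(ζ : ℂ) + μ‖ := by
  have hμ' : c ^ 2 * (μ.re ^ 2 + μ.im ^ 2) ≤ μ.im ^ 2 := by
    have := pow_le_pow_left₀ (by positivity) hμ 2
    rwa [mul_pow, sq_abs, Complex.sq_norm, normSq_apply, ← sq, ← sq] at this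
  rw [← pow_le_pow_iff_left₀ (by positivity) (norm_nonneg _) two_ne_zero, Complex.sq_norm,
    normSq_apply, mul_pow, sq_abs]
  simp only [add_re, ofReal_re, add_im, ofReal_im, zero_add]
  rcases hc₁.lt_or_eq with hc₁ | rfl
  -- `(1 - c²) (‖ζ + μ‖² - c² ζ²) = ((1 - c²) ζ + Re μ)² + ((Im μ)² - c² ‖μ‖²)`
  · have : 0 < 1 - c ^ 2 := by nlinarith
    nlinarith [sq_nonneg ((1 - c ^ 2) * ζ + μ.re)]
  · nlinarith [sq_nonneg μ.re]

lemma sq_mul_rpow_mul_rpow_le_sq {c x m r β : ℝ} (hc₀ : 0 ≤ c) (hc₁ : c ≤ 1) (hx : 0 ≤ x)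
    (hm : 0 ≤ m) (hβ₀ : 0 ≤ β) (hβ₁ : β ≤ 1) (hxr : c * x ≤ r) (hmr : m ≤ r) :
    c ^ 2 * x ^ (2 - 2 * β) * m ^ (2 * β) ≤ r ^ 2 := by
  have hr : 0 ≤ r := hm.trans hmr
  calc c ^ 2 * x ^ (2 - 2 * β) * m ^ (2 * β)
      ≤ c ^ (2 - 2 * β) * x ^ (2 - 2 * β) * m ^ (2 * β) := by
        rw [← Real.rpow_two]
        have : c ^ (2 : ℝ) ≤ c ^ (2 - 2 * β) :=
          Real.rpow_le_rpow_of_exponent_ge' hc₀ hc₁ (by linarith) (by linarith)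
        gcongr
    _ = (c * x) ^ (2 - 2 * β) * m ^ (2 * β) := by rw [Real.mul_rpow hc₀ hx]
    _ ≤ r ^ (2 - 2 * β) * r ^ (2 * β) := by gcongr; linarith
    _ = r ^ 2 := by rw [← Real.rpow_add' hr (by norm_num), sub_add_cancel, Real.rpow_two]

lemma rpow_div_sq_le {c m r ζ α₁ α₂ : ℝ} (hc₀ : 0 < c) (hc₁ : c ≤ 1) (hm : 0 < m)
    (hζr : c * |ζ| ≤ r) (hmr : m ≤ r) (hα₁ : -1 < α₁) (h₁₂ : α₁ ≤ α₂) (h₂₁ : α₂ ≤ α₁ + 1) :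
    |ζ| ^ (2 + 2 * α₁) / r ^ 2 ≤ (c ^ 2)⁻¹ * m ^ (-(2 * (α₂ - α₁))) * |ζ| ^ (2 * α₂) := by
  have hr : 0 < r := hm.trans_le hmr
  rcases eq_or_ne ζ 0 with rfl | hζ
  · rw [abs_zero, Real.zero_rpow (by linarith), zero_div]
    positivity
  have hsplit : |ζ| ^ (2 + 2 * α₁) = |ζ| ^ (2 * α₂) * |ζ| ^ (2 - 2 * (α₂ - α₁)) := by
    rw [← Real.rpow_add (abs_pos.mpr hζ)]; ring_nf
  have key := sq_mul_rpow_mul_rpow_le_sq (β := α₂ - α₁) hc₀.le hc₁ (abs_nonneg ζ) hm.le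
    (by linarith) (by linarith) hζr hmr
  rw [Real.rpow_neg hm.le, div_le_iff₀ (by positivity), hsplit]
  calc |ζ| ^ (2 * α₂) * |ζ| ^ (2 - 2 * (α₂ - α₁))
      = (c ^ 2)⁻¹ * (m ^ (2 * (α₂ - α₁)))⁻¹ * |ζ| ^ (2 * α₂) *
          (c ^ 2 * |ζ| ^ (2 - 2 * (α₂ - α₁)) * m ^ (2 * (α₂ - α₁))) := by
        field_simp
    _ ≤ _ := by gcongr

/-- First part of Lemma 5 of the paper (in Fourier form): for `0 ≤ α₁ ≤ α₂ ≤ 1`,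
`‖(D ± 2λ²)⁻¹Du‖²_{Ḣ^{α₁}} ≲ (2 Im λ²)^{−2(α₂−α₁)} ‖u‖²_{Ḣ^{α₂}}` on `Γ_δ`. -/
theorem resolvent_deriv_hom_sobolev_bound (δ : ℝ) (hδ0 : 0 < δ) (hδ : δ < Real.pi / 2)
    (α₁ α₂ : ℝ) (h0 : 0 ≤ α₁) (h12 : α₁ ≤ α₂) (h21 : α₂ ≤ 1) :
    ∃ C : ℝ, 0 < C ∧ ∀ l ∈ GammaSet δ, ∀ ε : ℝ, (ε = 1 ∨ ε = -1) →
      ∀ u : SchwartzMap ℝ ℂ,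
        (∫ ζ : ℝ, |ζ| ^ (2 + 2 * α₁) * ‖FT (⇑u) ζ‖ ^ 2 / ‖(ζ : ℂ) + ε * 2 * l ^ 2‖ ^ 2)
          ≤ C * (2 * (l ^ 2).im) ^ (-(2 * (α₂ - α₁)))
            * ∫ ζ : ℝ, |ζ| ^ (2 * α₂) * ‖FT (⇑u) ζ‖ ^ 2 := by
  have hsin : 0 < Real.sin δ := Real.sin_pos_of_pos_of_lt_pi hδ0 (by linarith [Real.pi_pos])
  refine ⟨(Real.sin δ ^ 2)⁻¹, by positivity, fun l hl ε hε u ↦ ?_⟩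
  have hε : |ε| = 1 := by rcases hε with rfl | rfl <;> simp
  set μ : ℂ := ε * 2 * l ^ 2
  have hμ_im : |μ.im| = 2 * (l ^ 2).im := by
    simp [μ, abs_mul, hε, hl.1.le]
  have hμ_sector : Real.sin δ * ‖μ‖ ≤ |μ.im| := by
    rw [hμ_im, norm_mul, norm_mul, Complex.norm_real, Real.norm_eq_abs, hε, Complex.norm_two]
    linarith [sin_mul_norm_le_im_of_mem_GammaSet hδ0.le hl]
  have hpointwise (ζ : ℝ) : |ζ| ^ (2 + 2 * α₁) * ‖FT u ζ‖ ^ 2 / ‖(ζ : ℂ) + μ‖ ^ 2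
      ≤ (Real.sin δ ^ 2)⁻¹ * (2 * (l ^ 2).im) ^ (-(2 * (α₂ - α₁)))
        * (|ζ| ^ (2 * α₂) * ‖FT u ζ‖ ^ 2) := by
    have him : |μ.im| ≤ ‖(ζ : ℂ) + μ‖ := by simpa using Complex.abs_im_le_norm ((ζ : ℂ) + μ)
    rw [mul_div_right_comm, ← mul_assoc]
    gcongr
    exact rpow_div_sq_le hsin (Real.sin_le_one δ) (by linarith [hl.1])
      (mul_abs_le_norm_ofReal_add hsin.le (Real.sin_le_one δ) hμ_sector ζ) (hμ_im ▸ him)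
      (by linarith) h12 (by linarith)
  obtain ⟨w, hw⟩ := exists_schwartzMap_eq_FT u
  have hint : Integrable (fun ζ : ℝ ↦ |ζ| ^ (2 * α₂) * ‖FT u ζ‖ ^ 2) := by
    simpa only [hw, Real.norm_eq_abs] using
      w.integrable_rpow_mul_norm_sq (μ := volume) (p := 2 * α₂) (by linarith)
  calc _ ≤ ∫ ζ : ℝ, (Real.sin δ ^ 2)⁻¹ * (2 * (l ^ 2).im) ^ (-(2 * (α₂ - α₁)))
          * (|ζ| ^ (2 * α₂) * ‖FT u ζ‖ ^ 2) :=
        integral_mono_of_nonneg (.of_forall fun ζ ↦ by positivity) (hint.const_mul _)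
          (.of_forall hpointwise)
    _ = _ := integral_const_mul _ _
end

section
/- Fix δ ∈ (0, π/2). For every α ∈ [0,1] there exists a constant C = C(α, δ) > 0, independent of j, such that for every j ∈ ℕ, every λ ∈ Γ_δ, and every Schwartz function u on ℝ: ∬_{ℝ²} |ζ₁ − ζ₂|^{2(j+1)} |û(ζ₁ − ζ₂)|² / ( |ζ₁ − λ²|² |ζ₂ − λ²|² ) dζ₁ dζ₂ ≤ C |λ|^{−2−4α} ‖u‖²_{H^{j+α}(ℝ)}. -/
/-!
Write `λ² = a + ib`; on `Γ_δ` one has `b ≥ sin δ · |λ|²`. The shear `(ζ₁, ζ₂) ↦ (ζ₁ - ζ₂, ζ₂)`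
turns the double integral into `∫ |ζ|^{2(j+1)} |û(ζ)|² K(ζ) dζ` with
`K(ζ) = ∫ dy / (|ζ + y - λ²|² |y - λ²|²)`. One of the two factors is at least `ζ²/4 + b²`, so the
Cauchy integral `∫ dx / |x - λ²|² = π / b` gives `K(ζ) ≤ 2π / (b (ζ²/4 + b²))`. Finally
`t / (t + c) ≤ (t / c)^α` for `α ∈ [0, 1]` bounds `|ζ|^{2(j+1)} K(ζ)` by
`8π b^{-1-2α} (1 + ζ²)^{j+α}`.
-/

open MeasureTheory Complex

/-- The squared Sobolev norm `‖u‖²_{H^s} = ∫ (1+ζ²)^s |û(ζ)|² dζ`. -/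
noncomputable def sobNormSq (s : ℝ) (u : ℝ → ℂ) : ℝ :=
  ∫ ζ : ℝ, (1 + ζ ^ 2) ^ s * ‖FT u ζ‖ ^ 2

/-- The Sobolev norm `‖u‖_{H^s}`. -/
noncomputable def sobNorm (s : ℝ) (u : ℝ → ℂ) : ℝ :=
  Real.sqrt (sobNormSq s u)

open scoped Real
open ProbabilityTheory SchwartzMap FourierTransform

lemma sq_norm_ofReal_sub (x : ℝ) (w : ℂ) : ‖(x : ℂ) - w‖ ^ 2 = (x - w.re) ^ 2 + w.im ^ 2 := by
  rw [Complex.sq_norm, Complex.normSq_apply]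
  simp only [sub_re, ofReal_re, sub_im, ofReal_im]
  ring

lemma lintegral_ofReal_inv_sq_norm_ofReal_sub {w : ℂ} (hw : 0 < w.im) :
    ∫⁻ x : ℝ, ENNReal.ofReal (‖(x : ℂ) - w‖ ^ 2)⁻¹ = ENNReal.ofReal (π / w.im) := by
  have h : ∀ x : ℝ, ENNReal.ofReal (‖(x : ℂ) - w‖ ^ 2)⁻¹
      = ENNReal.ofReal (π / w.im) * cauchyPDF w.re w.im.toNNReal x := by
    intro x
    rw [cauchyPDF_def, ← ENNReal.ofReal_mul (by positivity), cauchyPDFReal_def,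
      Real.coe_toNNReal _ hw.le, sq_norm_ofReal_sub]
    field_simp
  simp_rw [h]
  rw [lintegral_const_mul _ (measurable_cauchyPDF _ _),
    lintegral_cauchyPDF_eq_one _ (by simpa using hw), mul_one]

lemma sq_sub_div_four_le_or_le (p q : ℝ) : (p - q) ^ 2 / 4 ≤ p ^ 2 ∨ (p - q) ^ 2 / 4 ≤ q ^ 2 := by
  rcases le_total (p ^ 2) (q ^ 2) with h | h
  · right; nlinarith [sq_nonneg (p + q)]
  · left; nlinarith [sq_nonneg (p + q)]

lemma mul_inv_le_inv_mul_inv_add_inv {A B m : ℝ} (hm : 0 < m) (hA : 0 < A) (hB : 0 < B)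
    (h : m ≤ A ∨ m ≤ B) : (A * B)⁻¹ ≤ m⁻¹ * (A⁻¹ + B⁻¹) := by
  rw [mul_inv, mul_add]
  rcases h with h | h
  · have : A⁻¹ * B⁻¹ ≤ m⁻¹ * B⁻¹ := by gcongr
    linarith [show 0 ≤ m⁻¹ * A⁻¹ by positivity]
  · have : A⁻¹ * B⁻¹ ≤ m⁻¹ * A⁻¹ := by rw [mul_comm]; gcongr
    linarith [show 0 ≤ m⁻¹ * B⁻¹ by positivity]

lemma inv_sq_norm_sub_mul_sq_norm_sub_le {w : ℂ} (hw : w.im ≠ 0) (x y : ℝ) :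
    (‖(x : ℂ) - w‖ ^ 2 * ‖(y : ℂ) - w‖ ^ 2)⁻¹
      ≤ ((x - y) ^ 2 / 4 + w.im ^ 2)⁻¹ * ((‖(x : ℂ) - w‖ ^ 2)⁻¹ + (‖(y : ℂ) - w‖ ^ 2)⁻¹) := by
  have hb : 0 < w.im ^ 2 := by positivity
  rw [sq_norm_ofReal_sub, sq_norm_ofReal_sub]
  refine mul_inv_le_inv_mul_inv_add_inv (by positivity) (by positivity) (by positivity) ?_
  have h := sq_sub_div_four_le_or_le (x - w.re) (y - w.re)
  rw [sub_sub_sub_cancel_right] at h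
  rcases h with h | h
  · exact Or.inl (by linarith)
  · exact Or.inr (by linarith)

lemma lintegral_inv_sq_norm_sub_mul_sq_norm_sub_le {w : ℂ} (hw : 0 < w.im) (z : ℝ) :
    ∫⁻ y : ℝ, ENNReal.ofReal (‖((z + y : ℝ) : ℂ) - w‖ ^ 2 * ‖(y : ℂ) - w‖ ^ 2)⁻¹
      ≤ ENNReal.ofReal (2 * π / w.im * (z ^ 2 / 4 + w.im ^ 2)⁻¹) := by
  set m := (z ^ 2 / 4 + w.im ^ 2)⁻¹
  have hm : 0 ≤ m := by positivity
  have hmeas : Measurable fun y : ℝ => ENNReal.ofReal (‖(y : ℂ) - w‖ ^ 2)⁻¹ := by fun_prop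
  calc ∫⁻ y : ℝ, ENNReal.ofReal (‖((z + y : ℝ) : ℂ) - w‖ ^ 2 * ‖(y : ℂ) - w‖ ^ 2)⁻¹
      ≤ ∫⁻ y : ℝ, ENNReal.ofReal m * (ENNReal.ofReal (‖((z + y : ℝ) : ℂ) - w‖ ^ 2)⁻¹
          + ENNReal.ofReal (‖(y : ℂ) - w‖ ^ 2)⁻¹) := by
        refine lintegral_mono fun y => ?_
        rw [← ENNReal.ofReal_add (by positivity) (by positivity), ← ENNReal.ofReal_mul hm]
        refine ENNReal.ofReal_le_ofReal ?_
        simpa using inv_sq_norm_sub_mul_sq_norm_sub_le hw.ne' (z + y) y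
    _ = ENNReal.ofReal m * (ENNReal.ofReal (π / w.im) + ENNReal.ofReal (π / w.im)) := by
        rw [lintegral_const_mul' _ _ ENNReal.ofReal_ne_top,
          lintegral_add_right _ hmeas,
          lintegral_add_left_eq_self (fun y : ℝ => ENNReal.ofReal (‖(y : ℂ) - w‖ ^ 2)⁻¹) z,
          lintegral_ofReal_inv_sq_norm_ofReal_sub hw]
    _ = ENNReal.ofReal (2 * π / w.im * m) := by
        rw [← ENNReal.ofReal_add (by positivity) (by positivity), ← ENNReal.ofReal_mul hm]
        ring_nf

theorem integral_div_sq_norm_sub_mul_sq_norm_sub_le {w : ℂ} (hw : 0 < w.im) {N T : ℝ → ℝ}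
    (hN : Measurable N) (hN0 : ∀ z, 0 ≤ N z) (hT : Integrable T)
    (hNT : ∀ z, N z * (2 * π / w.im * (z ^ 2 / 4 + w.im ^ 2)⁻¹) ≤ T z) :
    ∫ q : ℝ × ℝ, N (q.1 - q.2) / (‖(q.1 : ℂ) - w‖ ^ 2 * ‖(q.2 : ℂ) - w‖ ^ 2) ≤ ∫ z, T z := by
  set F : ℝ × ℝ → ℝ := fun p => N p.1 / (‖((p.1 + p.2 : ℝ) : ℂ) - w‖ ^ 2 * ‖(p.2 : ℂ) - w‖ ^ 2)
  have hF : Measurable F := by fun_prop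
  have hT0 : ∀ z, 0 ≤ T z := fun z => (mul_nonneg (hN0 z) (by positivity)).trans (hNT z)
  have hshear : ∀ q : ℝ × ℝ, N (q.1 - q.2) / (‖(q.1 : ℂ) - w‖ ^ 2 * ‖(q.2 : ℂ) - w‖ ^ 2)
      = F (q.1 - q.2, q.2) := fun q => by simp only [F, sub_add_cancel]
  simp_rw [hshear]
  have hbound : ∫⁻ q : ℝ × ℝ, ENNReal.ofReal (F (q.1 - q.2, q.2))
      ≤ ENNReal.ofReal (∫ z, T z) := calc
    _ = ∫⁻ z, ∫⁻ y, ENNReal.ofReal (F (z, y)) :=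
      ((measurePreserving_sub_prod volume volume).lintegral_comp
        (f := fun p => ENNReal.ofReal (F p)) (by fun_prop)).trans
        (lintegral_prod _ (by fun_prop))
    _ ≤ ∫⁻ z, ENNReal.ofReal (T z) := lintegral_mono fun z => calc
      _ = ENNReal.ofReal (N z) * ∫⁻ y : ℝ,
          ENNReal.ofReal (‖((z + y : ℝ) : ℂ) - w‖ ^ 2 * ‖(y : ℂ) - w‖ ^ 2)⁻¹ := by
        rw [← lintegral_const_mul' _ _ ENNReal.ofReal_ne_top]
        simp_rw [F, div_eq_mul_inv, ENNReal.ofReal_mul (hN0 z)]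
      _ ≤ ENNReal.ofReal (N z) * ENNReal.ofReal (2 * π / w.im * (z ^ 2 / 4 + w.im ^ 2)⁻¹) := by
        gcongr
        exact lintegral_inv_sq_norm_sub_mul_sq_norm_sub_le hw z
      _ ≤ ENNReal.ofReal (T z) := by
        rw [← ENNReal.ofReal_mul (hN0 z)]
        exact ENNReal.ofReal_le_ofReal (hNT z)
    _ = ENNReal.ofReal (∫ z, T z) :=
      (ofReal_integral_eq_lintegral_ofReal hT (Filter.Eventually.of_forall hT0)).symm
  rw [integral_eq_lintegral_of_nonneg_ae (f := fun q : ℝ × ℝ => F (q.1 - q.2, q.2))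
    (Filter.Eventually.of_forall fun q => div_nonneg (hN0 _) (by positivity))
    (hF.comp (by fun_prop)).aestronglyMeasurable]
  exact ENNReal.toReal_le_of_le_ofReal (integral_nonneg hT0) hbound

lemma div_add_le_rpow {t c α : ℝ} (ht : 0 ≤ t) (hc : 0 < c) (hα0 : 0 ≤ α) (hα1 : α ≤ 1) :
    t / (t + c) ≤ (t / c) ^ α := by
  have hx : 0 ≤ t / c := div_nonneg ht hc.le
  have hmin : t / (t + c) ≤ min (t / c) 1 :=
    le_min (div_le_div_of_nonneg_left ht hc (by linarith)) (div_le_one_of_le₀ (by linarith)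
      (by positivity))
  rcases le_total (t / c) 1 with h | h
  · exact hmin.trans ((min_le_left _ _).trans (Real.self_le_rpow_of_le_one hx h hα1))
  · exact hmin.trans ((min_le_right _ _).trans (Real.one_le_rpow h hα0))

lemma pow_succ_mul_div_add_sq_le {b α s : ℝ} (hb : 0 < b) (hα0 : 0 ≤ α) (hα1 : α ≤ 1)
    (hs : 0 ≤ s) (j : ℕ) :
    s ^ (j + 1) * (2 * π / b * (s / 4 + b ^ 2)⁻¹)
      ≤ 8 * π * b ^ (-1 - 2 * α) * (1 + s) ^ ((j : ℝ) + α) := by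
  have hb2 : (b ^ 2) ^ α = b ^ (2 * α) := by
    rw [← Real.rpow_natCast, ← Real.rpow_mul hb.le, Nat.cast_ofNat]
  have hbα : b ^ (-1 - 2 * α) = b⁻¹ / (b ^ 2) ^ α := by
    rw [Real.rpow_sub hb, Real.rpow_neg_one, hb2]
  calc s ^ (j + 1) * (2 * π / b * (s / 4 + b ^ 2)⁻¹)
      = 8 * π / b * s ^ j * ((s / 4) / (s / 4 + b ^ 2)) := by
        field_simp
        ring
    _ ≤ 8 * π / b * s ^ j * ((s / 4) / b ^ 2) ^ α := by
        gcongr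
        exact div_add_le_rpow (by positivity) (by positivity) hα0 hα1
    _ ≤ 8 * π / b * s ^ j * (s / b ^ 2) ^ α := by
        gcongr
        linarith
    _ = 8 * π * b ^ (-1 - 2 * α) * (s ^ (j : ℝ) * s ^ α) := by
        rw [Real.div_rpow hs (by positivity), hbα, Real.rpow_natCast]
        ring
    _ ≤ 8 * π * b ^ (-1 - 2 * α) * (1 + s) ^ ((j : ℝ) + α) := by
        rw [Real.rpow_add (by positivity)]
        gcongr <;> linarith

lemma Complex.sin_mul_norm_le_im {z : ℂ} {δ : ℝ} (hδ : -(π / 2) ≤ δ) (h₁ : δ ≤ z.arg)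
    (h₂ : z.arg ≤ π - δ) : Real.sin δ * ‖z‖ ≤ z.im := by
  rw [← norm_mul_sin_arg, mul_comm]
  gcongr
  rcases le_total z.arg (π / 2) with h | h
  · exact Real.sin_le_sin_of_le_of_le_pi_div_two hδ h h₁
  · rw [← Real.sin_pi_sub z.arg]
    exact Real.sin_le_sin_of_le_of_le_pi_div_two hδ (by linarith) (by linarith)

lemma SchwartzMap.integrable_one_add_norm_sq_rpow_mul_norm_sq {H F : Type*}
    [NormedAddCommGroup H] [InnerProductSpace ℝ H] [MeasurableSpace H] [BorelSpace H]
    [SecondCountableTopology H] [NormedAddCommGroup F] [NormedSpace ℝ F]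
    {μ : Measure H} [μ.HasTemperateGrowth] (v : 𝓢(H, F)) (s : ℝ) :
    Integrable (fun x => (1 + ‖x‖ ^ 2) ^ s * ‖v x‖ ^ 2) μ := by
  have hg := Function.hasTemperateGrowth_one_add_norm_sq_rpow H s
  have hW := ((smulLeftCLM F fun x : H => (1 + ‖x‖ ^ 2) ^ s) v).integrable (μ := μ)
  refine (hW.norm.mul_bdd (c := SchwartzMap.seminorm ℝ 0 0 v) v.continuous.norm.aestronglyMeasurable
    (Filter.Eventually.of_forall fun x => by simpa using v.norm_le_seminorm ℝ x)).congr
    (Filter.Eventually.of_forall fun x => ?_)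
  simp only [smulLeftCLM_apply_apply hg, norm_smul, Real.norm_eq_abs,
    abs_of_nonneg (Real.rpow_nonneg (by positivity : (0 : ℝ) ≤ 1 + ‖x‖ ^ 2) s)]
  ring

lemma exists_schwartzMap_coe_eq_FT (u : 𝓢(ℝ, ℂ)) : ∃ v : 𝓢(ℝ, ℂ), ⇑v = FT u := by
  let g : ℝ ≃L[ℝ] ℝ := ContinuousLinearEquiv.unitsEquivAut ℝ
    (Units.mk0 (-(2 * π)⁻¹) (neg_ne_zero.mpr (by positivity)))
  -- Mathlib's `𝓕` has kernel `e^{-2πixξ}`, so `FT u ζ = (2π)^{-1/2} 𝓕 u (-ζ / (2π))`.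
  refine ⟨(Real.sqrt (2 * π) : ℂ)⁻¹ • compCLMOfContinuousLinearEquiv ℝ g (𝓕 u), ?_⟩
  ext ζ
  simp only [FT, smul_apply, compCLMOfContinuousLinearEquiv_apply, Function.comp_apply,
    fourier_coe, Real.fourier_real_eq_integral_exp_smul, smul_eq_mul, g,
    ContinuousLinearEquiv.unitsEquivAut_apply, Units.val_mk0]
  congr 2 with x
  congr 2
  push_cast
  field_simp

lemma im_sq_rpow_le_of_mem_GammaSet {δ : ℝ} (hδ0 : 0 < δ) {l : ℂ} (hl : l ∈ GammaSet δ) {e : ℝ}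
    (he : e ≤ 0) : (l ^ 2).im ^ e ≤ Real.sin δ ^ e * ‖l‖ ^ (2 * e) := by
  obtain ⟨hb, harg₁, harg₂⟩ := hl
  have hsin : 0 < Real.sin δ := Real.sin_pos_of_pos_of_lt_pi hδ0 (by linarith [Real.pi_pos])
  have hl0 : 0 < ‖l‖ := norm_pos_iff.mpr (by rintro rfl; simp at hb)
  have hbl : Real.sin δ * ‖l‖ ^ 2 ≤ (l ^ 2).im := by
    simpa [norm_pow] using
      Complex.sin_mul_norm_le_im (by linarith [Real.pi_pos]) harg₁.le harg₂.le
  have h := Real.rpow_le_rpow_of_nonpos (by positivity) hbl he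
  rwa [Real.mul_rpow hsin.le (by positivity), ← Real.rpow_natCast, ← Real.rpow_mul hl0.le,
    Nat.cast_ofNat] at h

/-- Lemma 7 of the paper (Hilbert–Schmidt bound for the overloaded operator), in
integral form: for every `α ∈ [0,1]` there is `C = C(α,δ)`, independent of `j`, with
`∬ |ζ₁−ζ₂|^{2(j+1)}|û(ζ₁−ζ₂)|²/(|ζ₁−λ²|²|ζ₂−λ²|²) ≤ C |λ|^{−2−4α} ‖u‖²_{H^{j+α}}`. -/
theorem overloaded_HS_bound (δ : ℝ) (hδ0 : 0 < δ) (hδ : δ < Real.pi / 2)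
    (α : ℝ) (hα0 : 0 ≤ α) (hα1 : α ≤ 1) :
    ∃ C : ℝ, 0 < C ∧ ∀ j : ℕ, ∀ l ∈ GammaSet δ, ∀ u : SchwartzMap ℝ ℂ,
      (∫ q : ℝ × ℝ, |q.1 - q.2| ^ (2 * (j + 1)) * ‖FT (⇑u) (q.1 - q.2)‖ ^ 2
          / (‖(q.1 : ℂ) - l ^ 2‖ ^ 2 * ‖(q.2 : ℂ) - l ^ 2‖ ^ 2))
        ≤ C * ‖l‖ ^ (-2 - 4 * α) * sobNormSq ((j : ℝ) + α) (⇑u) := by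
  have hsin : 0 < Real.sin δ := Real.sin_pos_of_pos_of_lt_pi hδ0 (by linarith [Real.pi_pos])
  refine ⟨8 * π * Real.sin δ ^ (-1 - 2 * α), by positivity, fun j l hl u => ?_⟩
  have him := im_sq_rpow_le_of_mem_GammaSet hδ0 hl (by linarith : -1 - 2 * α ≤ 0)
  rw [show 2 * (-1 - 2 * α) = -2 - 4 * α by ring] at him
  obtain ⟨v, hv⟩ := exists_schwartzMap_coe_eq_FT u
  have hT := (v.integrable_one_add_norm_sq_rpow_mul_norm_sq (μ := volume) ((j : ℝ) + α)).const_mul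
    (8 * π * Real.sin δ ^ (-1 - 2 * α) * ‖l‖ ^ (-2 - 4 * α))
  simp only [Real.norm_eq_abs, sq_abs] at hT
  rw [sobNormSq, ← integral_const_mul, ← hv]
  refine integral_div_sq_norm_sub_mul_sq_norm_sub_le hl.1
    (N := fun z => |z| ^ (2 * (j + 1)) * ‖v z‖ ^ 2) (by fun_prop) (fun z => by positivity) hT
    fun z => ?_
  calc |z| ^ (2 * (j + 1)) * ‖v z‖ ^ 2 * (2 * π / (l ^ 2).im * (z ^ 2 / 4 + (l ^ 2).im ^ 2)⁻¹)
      = (z ^ 2) ^ (j + 1) * (2 * π / (l ^ 2).im * (z ^ 2 / 4 + (l ^ 2).im ^ 2)⁻¹) * ‖v z‖ ^ 2 := by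
        rw [pow_mul, sq_abs]
        ring
    _ ≤ 8 * π * (l ^ 2).im ^ (-1 - 2 * α) * (1 + z ^ 2) ^ ((j : ℝ) + α) * ‖v z‖ ^ 2 := by
        gcongr ?_ * _
        exact pow_succ_mul_div_add_sq_le hl.1 hα0 hα1 (sq_nonneg z) j
    _ ≤ 8 * π * (Real.sin δ ^ (-1 - 2 * α) * ‖l‖ ^ (-2 - 4 * α))
          * (1 + z ^ 2) ^ ((j : ℝ) + α) * ‖v z‖ ^ 2 := by
        gcongr
    _ = 8 * π * Real.sin δ ^ (-1 - 2 * α) * ‖l‖ ^ (-2 - 4 * α)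
          * ((1 + z ^ 2) ^ ((j : ℝ) + α) * ‖v z‖ ^ 2) := by
        ring
end

section
/- Let u be a Schwartz function on ℝ, let U(x) be the 2×2 matrix with zero diagonal and off-diagonal entries u(x) (upper) and \overline{u}(x) (lower), and let σ₃ = diag(1, −1). Define 2×2-matrix-valued functions R_k^d(x,p) and R_k^a(x,p), for p ∈ ℝ with p² ≠ 1, by R₀^d(x,p) = −(pσ₃ − 1)/(p² − 1), R₀^a(x,p) = −iU(x)/(p² − 1), and for k ≥ 1: R_k^d = (p² − 1)^{-1} [ −iU R_{k−1}^a + i ∂_x R_{k−1}^d · σ₃ ] (pσ₃ − 1) and R_k^a = (p² − 1)^{-1} [ iU R_k^d + i ∂_x R_{k−1}^a · σ₃ ] (pσ₃ + 1). Then for every k ≥ 1 there exist 2×2-matrix-valued functions A₀(x), …, A_k(x) and B₀(x), …, B_k(x) such that R_k^d(x,p) = (p² − 1)^{−(k+1)} ∑_{i=0}^{k} A_i(x) p^i and R_k^a(x,p) = (p² − 1)^{−(k+1)} ∑_{i=0}^{k} B_i(x) p^i, where every entry of every A_i belongs to the ℂ-subalgebra of smooth functions on ℝ generated by { ∂_x^n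 u, ∂_x^n \overline{u} : 0 ≤ n ≤ k − 1 }, and every entry of every B_i belongs to the ℂ-subalgebra generated by { ∂_x^n u, ∂_x^n \overline{u} : 0 ≤ n ≤ k }. -/
open MeasureTheory Complex Matrix
open scoped ContDiff

/-- The Pauli matrix `σ₃ = diag(1, −1)`. -/
noncomputable def sigma3 : Matrix (Fin 2) (Fin 2) ℂ := !![1, 0; 0, -1]

/-- The matrix `U(x)` with zero diagonal and off-diagonal entries `u(x)`, `conj(u(x))`. -/
noncomputable def Umat (u : ℝ → ℂ) (x : ℝ) : Matrix (Fin 2) (Fin 2) ℂ :=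
  !![0, u x; (starRingEnd ℂ) (u x), 0]

/-- Entrywise partial derivative in `x` of a matrix-valued function of `(x, p)`. -/
noncomputable def pdx (R : ℝ → ℝ → Matrix (Fin 2) (Fin 2) ℂ) :
    ℝ → ℝ → Matrix (Fin 2) (Fin 2) ℂ :=
  fun x p => Matrix.of fun i j => deriv (fun y => R y p i j) x

/-- The pair `(R_k^d, R_k^a)` defined by the recursion
`R₀^d = −(pσ₃−1)/(p²−1)`, `R₀^a = −iU/(p²−1)`,
`R_k^d = (p²−1)⁻¹[−iU R_{k−1}^a + i∂ₓR_{k−1}^d σ₃](pσ₃−1)`,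
`R_k^a = (p²−1)⁻¹[iU R_k^d + i∂ₓR_{k−1}^a σ₃](pσ₃+1)`. -/
noncomputable def Rrec (u : ℝ → ℂ) :
    ℕ → ((ℝ → ℝ → Matrix (Fin 2) (Fin 2) ℂ) × (ℝ → ℝ → Matrix (Fin 2) (Fin 2) ℂ))
  | 0 =>
    (fun _x p => (-(((p : ℂ) ^ 2 - 1)⁻¹)) • ((p : ℂ) • sigma3 - 1),
     fun x p => (-(Complex.I * ((p : ℂ) ^ 2 - 1)⁻¹)) • Umat u x)
  | (k + 1) =>
    let Rd := (Rrec u k).1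
    let Ra := (Rrec u k).2
    let Rd' : ℝ → ℝ → Matrix (Fin 2) (Fin 2) ℂ := fun x p =>
      (((p : ℂ) ^ 2 - 1)⁻¹)
        • ((((-Complex.I) • (Umat u x * Ra x p) + Complex.I • (pdx Rd x p * sigma3)))
            * ((p : ℂ) • sigma3 - 1))
    let Ra' : ℝ → ℝ → Matrix (Fin 2) (Fin 2) ℂ := fun x p =>
      (((p : ℂ) ^ 2 - 1)⁻¹)
        • (((Complex.I • (Umat u x * Rd' x p) + Complex.I • (pdx Ra x p * sigma3)))
            * ((p : ℂ) • sigma3 + 1))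
    (Rd', Ra')

abbrev Mat2 := Matrix (Fin 2) (Fin 2) ℂ

/-! ### Generating sets and their adjoined algebras -/

noncomputable def Sgen (v : ℝ → ℂ) (j : ℕ) : Set (ℝ → ℂ) :=
  {f : ℝ → ℂ | ∃ n : ℕ, n ≤ j ∧
    (f = iteratedDeriv n v ∨ f = iteratedDeriv n (fun x => (starRingEnd ℂ) (v x)))}

lemma Sgen_mono (v : ℝ → ℂ) {j m : ℕ} (h : j ≤ m) : Sgen v j ⊆ Sgen v m := by
  rintro f ⟨n, hn, hf⟩; exact ⟨n, hn.trans h, hf⟩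

lemma adjoin_Sgen_mono (v : ℝ → ℂ) {j m : ℕ} (h : j ≤ m) :
    Algebra.adjoin ℂ (Sgen v j) ≤ Algebra.adjoin ℂ (Sgen v m) :=
  Algebra.adjoin_mono (Sgen_mono v h)

lemma mem_adjoin_smooth_deriv (u : SchwartzMap ℝ ℂ) (j : ℕ) {f : ℝ → ℂ}
    (hf : f ∈ Algebra.adjoin ℂ (Sgen (⇑u) j)) :
    ContDiff ℝ ∞ f ∧ (fun x => deriv f x) ∈ Algebra.adjoin ℂ (Sgen (⇑u) (j + 1)) := by
  have hu : ContDiff ℝ ∞ (⇑u) := u.smooth ⊤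
  have huc : ContDiff ℝ ∞ (fun x => (starRingEnd ℂ) (u x)) :=
    Complex.conjCLE.contDiff.comp hu
  induction hf using Algebra.adjoin_induction with
  | mem g hg =>
    obtain ⟨n, hn, hg⟩ := hg
    have hsm : ContDiff ℝ ∞ g := by
      rcases hg with hg | hg <;> subst hg <;>
        rw [iteratedDeriv_eq_iterate] <;> [exact hu.iterate_deriv n; exact huc.iterate_deriv n]
    refine ⟨hsm, ?_⟩
    apply Algebra.subset_adjoin
    rcases hg with hg | hg <;> subst hg
    · exact ⟨n + 1, by omega, Or.inl (by rw [iteratedDeriv_succ])⟩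
    · exact ⟨n + 1, by omega, Or.inr (by rw [iteratedDeriv_succ])⟩
  | algebraMap r =>
    have : (algebraMap ℂ (ℝ → ℂ) r) = fun _ : ℝ => r := rfl
    rw [this]
    refine ⟨contDiff_const, ?_⟩
    have : (fun x : ℝ => deriv (fun _ : ℝ => r) x) = fun _ : ℝ => (0 : ℂ) := by
      funext x; simp
    rw [this]
    exact Subalgebra.zero_mem _
  | add g h hg hh ihg ihh =>
    refine ⟨ihg.1.add ihh.1, ?_⟩
    have : (fun x => deriv (g + h) x) = fun x => deriv g x + deriv h x := by
      funext x
      exact deriv_add (ihg.1.differentiable (by simp) x) (ihh.1.differentiable (by simp) x)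
    rw [this]
    exact Subalgebra.add_mem _ ihg.2 ihh.2
  | mul g h hg hh ihg ihh =>
    refine ⟨ihg.1.mul ihh.1, ?_⟩
    have : (fun x => deriv (g * h) x)
        = fun x => deriv g x * h x + g x * deriv h x := by
      funext x
      exact deriv_mul (ihg.1.differentiable (by simp) x) (ihh.1.differentiable (by simp) x)
    rw [this]
    have hgm : g ∈ Algebra.adjoin ℂ (Sgen (⇑u) (j+1)) := adjoin_Sgen_mono _ (by omega) hg
    have hhm : h ∈ Algebra.adjoin ℂ (Sgen (⇑u) (j+1)) := adjoin_Sgen_mono _ (by omega) hh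
    exact Subalgebra.add_mem _ (Subalgebra.mul_mem _ ihg.2 hhm) (Subalgebra.mul_mem _ hgm ihh.2)

/-! ### Entrywise membership helpers -/

section entries
variable {T : Subalgebra ℂ (ℝ → ℂ)}

lemma entry_const (C : Mat2) (a b : Fin 2) : (fun _ : ℝ => C a b) ∈ T := by
  have : (fun _ : ℝ => C a b) = algebraMap ℂ (ℝ → ℂ) (C a b) := rfl
  rw [this]; exact Subalgebra.algebraMap_mem T _

lemma entry_add {P Q : ℝ → Mat2} (hP : ∀ a b, (fun x => P x a b) ∈ T)
    (hQ : ∀ a b, (fun x => Q x a b) ∈ T) :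
    ∀ a b, (fun x => (P x + Q x) a b) ∈ T := by
  intro a b
  have : (fun x => (P x + Q x) a b) = (fun x => P x a b) + (fun x => Q x a b) := rfl
  rw [this]; exact Subalgebra.add_mem T (hP a b) (hQ a b)

lemma entry_mul {P Q : ℝ → Mat2} (hP : ∀ a b, (fun x => P x a b) ∈ T)
    (hQ : ∀ a b, (fun x => Q x a b) ∈ T) :
    ∀ a b, (fun x => (P x * Q x) a b) ∈ T := by
  intro a b
  have : (fun x => (P x * Q x) a b)
      = (fun x => P x a 0) * (fun x => Q x 0 b) + (fun x => P x a 1) * (fun x => Q x 1 b) := by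
    funext x; simp [Matrix.mul_apply, Fin.sum_univ_two]
  rw [this]
  exact Subalgebra.add_mem T (Subalgebra.mul_mem T (hP a 0) (hQ 0 b))
    (Subalgebra.mul_mem T (hP a 1) (hQ 1 b))

lemma entry_smul (c : ℂ) {P : ℝ → Mat2} (hP : ∀ a b, (fun x => P x a b) ∈ T) :
    ∀ a b, (fun x => (c • P x) a b) ∈ T := by
  intro a b
  have : (fun x => (c • P x) a b) = c • (fun x => P x a b) := by
    funext x; simp [Matrix.smul_apply]
  rw [this]; exact Subalgebra.smul_mem T (hP a b) c

lemma entry_zero : ∀ a b : Fin 2, (fun _ : ℝ => (0 : Mat2) a b) ∈ T := fun a b =>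
  entry_const 0 a b

lemma entry_ite (c : Prop) [Decidable c] {P Q : ℝ → Mat2}
    (hP : ∀ a b, (fun x => P x a b) ∈ T) (hQ : ∀ a b, (fun x => Q x a b) ∈ T) :
    ∀ a b, (fun x => (if c then P x else Q x) a b) ∈ T := by
  intro a b
  by_cases h : c
  · simp only [if_pos h]; exact hP a b
  · simp only [if_neg h]; exact hQ a b

end entries

lemma entry_Umat (v : ℝ → ℂ) (j : ℕ) :
    ∀ a b, (fun x => Umat v x a b) ∈ Algebra.adjoin ℂ (Sgen v j) := by
  intro a b
  have hv : v ∈ Algebra.adjoin ℂ (Sgen v j) :=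
    Algebra.subset_adjoin ⟨0, Nat.zero_le _, Or.inl (by rw [iteratedDeriv_zero])⟩
  have hvc : (fun x => (starRingEnd ℂ) (v x)) ∈ Algebra.adjoin ℂ (Sgen v j) :=
    Algebra.subset_adjoin ⟨0, Nat.zero_le _, Or.inr (by rw [iteratedDeriv_zero])⟩
  fin_cases a <;> fin_cases b <;> simp only [Umat, Matrix.cons_val', Matrix.cons_val_zero,
    Matrix.cons_val_one, Matrix.head_cons, Matrix.empty_val', Matrix.cons_val_fin_one,
    Matrix.head_fin_const]
  · exact Subalgebra.zero_mem _
  · exact hv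
  · exact hvc
  · exact Subalgebra.zero_mem _

/-! ### Matrix polynomial algebra -/

lemma sigma3_sq : sigma3 * sigma3 = 1 := by
  rw [sigma3, Matrix.mul_fin_two, Matrix.one_fin_two]; norm_num

lemma shift_id (p : ℂ) :
    ((p • sigma3 - 1) * (p • sigma3 + 1) : Mat2) = (p ^ 2 - 1) • 1 := by
  have h1 : ((p • sigma3) * (p • sigma3) : Mat2) = (p ^ 2) • 1 := by
    rw [smul_mul_smul_comm, sigma3_sq]; ring_nf
  rw [sub_mul, mul_add, mul_one, one_mul, h1, sub_smul, one_smul]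
  abel

lemma poly_mul_shift (n : ℕ) (M : ℕ → Mat2) (p s : ℂ) :
    (∑ i ∈ Finset.range n, p ^ i • M i) * (p • sigma3 + s • 1)
      = ∑ i ∈ Finset.range (n + 1),
          p ^ i • ((if i = 0 then 0 else M (i - 1) * sigma3)
            + (if i < n then s • M i else 0)) := by
  rw [mul_add, Finset.sum_mul, Finset.sum_mul]
  have L1 : ∑ i ∈ Finset.range n, (p ^ i • M i) * (p • sigma3)
      = ∑ i ∈ Finset.range n, p ^ (i + 1) • (M i * sigma3) := by
    apply Finset.sum_congr rfl; intro i _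
    rw [smul_mul_assoc, mul_smul_comm, smul_smul, ← pow_succ]
  have L2 : ∑ i ∈ Finset.range n, (p ^ i • M i) * (s • 1)
      = ∑ i ∈ Finset.range n, p ^ i • (s • M i) := by
    apply Finset.sum_congr rfl; intro i _
    rw [smul_mul_assoc, mul_smul_comm, mul_one]
  rw [L1, L2]
  have R : ∑ i ∈ Finset.range (n + 1),
        p ^ i • ((if i = 0 then (0 : Mat2) else M (i - 1) * sigma3)
          + (if i < n then s • M i else 0))
      = (∑ i ∈ Finset.range (n + 1), p ^ i • (if i = 0 then (0 : Mat2) else M (i - 1) * sigma3))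
        + ∑ i ∈ Finset.range (n + 1), p ^ i • (if i < n then s • M i else (0 : Mat2)) := by
    simp only [smul_add, Finset.sum_add_distrib]
  rw [R]
  congr 1
  · rw [Finset.sum_range_succ'
      (fun i => p ^ i • (if i = 0 then (0 : Mat2) else M (i - 1) * sigma3)) n]
    simp
  · rw [Finset.sum_range_succ
      (fun i => p ^ i • (if i < n then s • M i else (0 : Mat2))) n]
    simp only [lt_irrefl, if_false, ite_false, smul_zero, add_zero]
    apply Finset.sum_congr rfl; intro i hi
    rw [if_pos (Finset.mem_range.mp hi)]

lemma combine_smul (c d : ℂ) (n : ℕ) (c1 c2 : ℂ) (W : Mat2) (P Q : ℕ → Mat2) :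
    c1 • (W * (d • ∑ i ∈ Finset.range n, c ^ i • P i))
      + c2 • ((d • ∑ i ∈ Finset.range n, c ^ i • Q i) * sigma3)
    = d • ∑ i ∈ Finset.range n, c ^ i • (c1 • (W * P i) + c2 • (Q i * sigma3)) := by
  rw [mul_smul_comm, smul_mul_assoc, smul_comm c1 d, smul_comm c2 d, ← smul_add]
  congr 1
  rw [Finset.mul_sum, Finset.sum_mul, Finset.smul_sum, Finset.smul_sum,
    ← Finset.sum_add_distrib]
  refine Finset.sum_congr rfl fun i _ => ?_
  rw [mul_smul_comm, smul_mul_assoc, smul_comm c1, smul_comm c2, ← smul_add]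

/-! ### pdx of matrix polynomials -/

noncomputable def pdxM (A : ℝ → Mat2) (x : ℝ) : Mat2 :=
  Matrix.of fun a b => deriv (fun y => A y a b) x

lemma pdx_poly {R : ℝ → ℝ → Mat2} {c : ℂ} {m n : ℕ} {A : ℕ → ℝ → Mat2} {p x : ℝ}
    (hR : ∀ y : ℝ, R y p = c ^ m • ∑ i ∈ Finset.range n, (p : ℂ) ^ i • A i y)
    (hA : ∀ i a b, DifferentiableAt ℝ (fun y => A i y a b) x) :
    pdx R x p = c ^ m • ∑ i ∈ Finset.range n, (p : ℂ) ^ i • pdxM (A i) x := by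
  ext a b
  show deriv (fun y => R y p a b) x = _
  have h1 : (fun y => R y p a b)
      = fun y => c ^ m * ∑ i ∈ Finset.range n, (p : ℂ) ^ i * A i y a b := by
    funext y; rw [hR y]
    simp [Matrix.smul_apply, Matrix.sum_apply, smul_eq_mul]
  rw [h1, deriv_const_mul_field]
  have h2 := deriv_fun_sum (u := Finset.range n) (A := fun i y => (p : ℂ) ^ i * A i y a b) (x := x)
    (fun i _ => (hA i a b).const_mul ((p : ℂ) ^ i))
  rw [h2]
  simp only [Matrix.smul_apply, Matrix.sum_apply, smul_eq_mul, pdxM, Matrix.of_apply]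
  congr 1
  exact Finset.sum_congr rfl fun i _ => deriv_const_mul_field _

lemma c_ne {p : ℝ} (hp : p ^ 2 ≠ 1) : ((p : ℂ) ^ 2 - 1) ≠ 0 := by
  intro h
  apply hp
  have : ((p ^ 2 - 1 : ℝ) : ℂ) = 0 := by push_cast; linear_combination h
  have := Complex.ofReal_eq_zero.mp this
  linarith

lemma Rrec_zero_fst (u : ℝ → ℂ) (x p : ℝ) :
    (Rrec u 0).1 x p = (-(((p : ℂ) ^ 2 - 1)⁻¹)) • ((p : ℂ) • sigma3 - 1) := rfl

lemma Rrec_zero_snd (u : ℝ → ℂ) (x p : ℝ) :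
    (Rrec u 0).2 x p = (-(Complex.I * ((p : ℂ) ^ 2 - 1)⁻¹)) • Umat u x := rfl

lemma Rrec_succ_fst (u : ℝ → ℂ) (k : ℕ) (x p : ℝ) :
    (Rrec u (k + 1)).1 x p
      = (((p : ℂ) ^ 2 - 1)⁻¹)
          • ((((-Complex.I) • (Umat u x * (Rrec u k).2 x p)
              + Complex.I • (pdx (Rrec u k).1 x p * sigma3)))
            * ((p : ℂ) • sigma3 - 1)) := rfl

lemma Rrec_succ_snd (u : ℝ → ℂ) (k : ℕ) (x p : ℝ) :
    (Rrec u (k + 1)).2 x p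
      = (((p : ℂ) ^ 2 - 1)⁻¹)
          • (((Complex.I • (Umat u x * (Rrec u (k + 1)).1 x p)
              + Complex.I • (pdx (Rrec u k).2 x p * sigma3)))
            * ((p : ℂ) • sigma3 + 1)) := rfl

/-! ### Step coefficient matrices -/

noncomputable def Mstep (u : ℝ → ℂ) (A B : ℕ → ℝ → Mat2) (i : ℕ) (x : ℝ) : Mat2 :=
  (-Complex.I) • (Umat u x * B i x) + Complex.I • (pdxM (A i) x * sigma3)

noncomputable def Astep (u : ℝ → ℂ) (k : ℕ) (A B : ℕ → ℝ → Mat2) (i : ℕ) (x : ℝ) : Mat2 :=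
  (if i = 0 then 0 else Mstep u A B (i - 1) x * sigma3)
    + (if i < k + 2 then (-1 : ℂ) • Mstep u A B i x else 0)

noncomputable def Bstep (u : ℝ → ℂ) (k : ℕ) (A B : ℕ → ℝ → Mat2) (i : ℕ) (x : ℝ) : Mat2 :=
  Complex.I • ((if i < k + 2 then Umat u x * Mstep u A B i x else 0)
    + ((if i = 0 then 0 else (pdxM (B (i - 1)) x * sigma3) * sigma3)
      + (if i < k + 2 then (1 : ℂ) • (pdxM (B i) x * sigma3) else 0)))

lemma step_fst_raw (u : ℝ → ℂ) (k : ℕ) (A B : ℕ → ℝ → Mat2)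
    (h1 : ∀ x p : ℝ, p ^ 2 ≠ 1 →
      (Rrec u k).1 x p = (((p : ℂ) ^ 2 - 1)⁻¹) ^ (k + 1)
        • ∑ i ∈ Finset.range (k + 2), (p : ℂ) ^ i • A i x)
    (h2 : ∀ x p : ℝ, p ^ 2 ≠ 1 →
      (Rrec u k).2 x p = (((p : ℂ) ^ 2 - 1)⁻¹) ^ (k + 1)
        • ∑ i ∈ Finset.range (k + 2), (p : ℂ) ^ i • B i x)
    (hAdiff : ∀ i (a b : Fin 2) x, DifferentiableAt ℝ (fun y => A i y a b) x) :
    ∀ x p : ℝ, p ^ 2 ≠ 1 →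
      (Rrec u (k + 1)).1 x p
        = (((p : ℂ) ^ 2 - 1)⁻¹) ^ (k + 2)
            • ((∑ i ∈ Finset.range (k + 2), (p : ℂ) ^ i • Mstep u A B i x)
                * ((p : ℂ) • sigma3 - 1)) := by
  intro x p hp
  rw [Rrec_succ_fst]
  have hpdxd : pdx (Rrec u k).1 x p
      = (((p : ℂ) ^ 2 - 1)⁻¹) ^ (k + 1)
          • ∑ i ∈ Finset.range (k + 2), (p : ℂ) ^ i • pdxM (A i) x :=
    pdx_poly (fun y => h1 y p hp) (fun i a b => hAdiff i a b x)
  rw [h2 x p hp, hpdxd, combine_smul, smul_mul_assoc, smul_smul, ← pow_succ']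
  rfl

lemma step_fst (u : ℝ → ℂ) (k : ℕ) (A B : ℕ → ℝ → Mat2)
    (h1 : ∀ x p : ℝ, p ^ 2 ≠ 1 →
      (Rrec u k).1 x p = (((p : ℂ) ^ 2 - 1)⁻¹) ^ (k + 1)
        • ∑ i ∈ Finset.range (k + 2), (p : ℂ) ^ i • A i x)
    (h2 : ∀ x p : ℝ, p ^ 2 ≠ 1 →
      (Rrec u k).2 x p = (((p : ℂ) ^ 2 - 1)⁻¹) ^ (k + 1)
        • ∑ i ∈ Finset.range (k + 2), (p : ℂ) ^ i • B i x)
    (hAdiff : ∀ i (a b : Fin 2) x, DifferentiableAt ℝ (fun y => A i y a b) x) :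
    ∀ x p : ℝ, p ^ 2 ≠ 1 →
      (Rrec u (k + 1)).1 x p
        = (((p : ℂ) ^ 2 - 1)⁻¹) ^ (k + 2)
            • ∑ i ∈ Finset.range (k + 3), (p : ℂ) ^ i • Astep u k A B i x := by
  intro x p hp
  rw [step_fst_raw u k A B h1 h2 hAdiff x p hp]
  congr 1
  have e : ((p : ℂ) • sigma3 - 1 : Mat2) = (p : ℂ) • sigma3 + (-1 : ℂ) • 1 := by
    rw [neg_one_smul, sub_eq_add_neg]
  rw [e, poly_mul_shift]
  rfl

lemma step_snd (u : ℝ → ℂ) (k : ℕ) (A B : ℕ → ℝ → Mat2)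
    (h1 : ∀ x p : ℝ, p ^ 2 ≠ 1 →
      (Rrec u k).1 x p = (((p : ℂ) ^ 2 - 1)⁻¹) ^ (k + 1)
        • ∑ i ∈ Finset.range (k + 2), (p : ℂ) ^ i • A i x)
    (h2 : ∀ x p : ℝ, p ^ 2 ≠ 1 →
      (Rrec u k).2 x p = (((p : ℂ) ^ 2 - 1)⁻¹) ^ (k + 1)
        • ∑ i ∈ Finset.range (k + 2), (p : ℂ) ^ i • B i x)
    (hAdiff : ∀ i (a b : Fin 2) x, DifferentiableAt ℝ (fun y => A i y a b) x)
    (hBdiff : ∀ i (a b : Fin 2) x, DifferentiableAt ℝ (fun y => B i y a b) x) :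
    ∀ x p : ℝ, p ^ 2 ≠ 1 →
      (Rrec u (k + 1)).2 x p
        = (((p : ℂ) ^ 2 - 1)⁻¹) ^ (k + 2)
            • ∑ i ∈ Finset.range (k + 3), (p : ℂ) ^ i • Bstep u k A B i x := by
  intro x p hp
  have hc : ((p : ℂ) ^ 2 - 1) ≠ 0 := c_ne hp
  set c : ℂ := ((p : ℂ) ^ 2 - 1)⁻¹ with hcdef
  have hpdxa : pdx (Rrec u k).2 x p
      = c ^ (k + 1) • ∑ i ∈ Finset.range (k + 2), (p : ℂ) ^ i • pdxM (B i) x :=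
    pdx_poly (fun y => h2 y p hp) (fun i a b => hBdiff i a b x)
  rw [Rrec_succ_snd, step_fst_raw u k A B h1 h2 hAdiff x p hp, hpdxa]
  have t1 : (Umat u x * (c ^ (k + 2)
        • ((∑ i ∈ Finset.range (k + 2), (p : ℂ) ^ i • Mstep u A B i x)
            * ((p : ℂ) • sigma3 - 1)))) * ((p : ℂ) • sigma3 + 1)
      = c ^ (k + 1) • ∑ i ∈ Finset.range (k + 2),
          (p : ℂ) ^ i • (Umat u x * Mstep u A B i x) := by
    rw [mul_smul_comm, smul_mul_assoc, mul_assoc, mul_assoc, shift_id, mul_smul_comm, mul_one,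
      mul_smul_comm, smul_smul]
    have hpow : c ^ (k + 2) * ((p : ℂ) ^ 2 - 1) = c ^ (k + 1) := by
      rw [pow_succ, mul_assoc, inv_mul_cancel₀ hc, mul_one]
    rw [hpow, Finset.mul_sum]
    congr 1
    exact Finset.sum_congr rfl fun i _ => (mul_smul_comm _ _ _)
  have t2 : ((c ^ (k + 1) • ∑ i ∈ Finset.range (k + 2), (p : ℂ) ^ i • pdxM (B i) x) * sigma3)
        * ((p : ℂ) • sigma3 + 1)
      = c ^ (k + 1) • ∑ i ∈ Finset.range (k + 3), (p : ℂ) ^ i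
          • ((if i = 0 then 0 else (pdxM (B (i - 1)) x * sigma3) * sigma3)
            + (if i < k + 2 then (1 : ℂ) • (pdxM (B i) x * sigma3) else 0)) := by
    rw [smul_mul_assoc, smul_mul_assoc]
    congr 1
    rw [Finset.sum_mul]
    have e1 : ∑ i ∈ Finset.range (k + 2), ((p : ℂ) ^ i • pdxM (B i) x) * sigma3
        = ∑ i ∈ Finset.range (k + 2), (p : ℂ) ^ i • (pdxM (B i) x * sigma3) :=
      Finset.sum_congr rfl fun i _ => smul_mul_assoc _ _ _
    have e2 : ((p : ℂ) • sigma3 + 1 : Mat2) = (p : ℂ) • sigma3 + (1 : ℂ) • 1 := by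
      rw [one_smul]
    rw [e1, e2, poly_mul_shift]
  rw [add_mul, smul_mul_assoc, smul_mul_assoc, t1, t2,
    smul_comm Complex.I (c ^ (k + 1)), smul_comm Complex.I (c ^ (k + 1)), ← smul_add,
    smul_smul, ← pow_succ']
  congr 1
  have ext1 : ∑ i ∈ Finset.range (k + 3),
        (p : ℂ) ^ i • (if i < k + 2 then Umat u x * Mstep u A B i x else 0)
      = ∑ i ∈ Finset.range (k + 2), (p : ℂ) ^ i • (Umat u x * Mstep u A B i x) := by
    rw [Finset.sum_range_succ, if_neg (lt_irrefl (k + 2)), smul_zero, add_zero]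
    exact Finset.sum_congr rfl fun i hi => by rw [if_pos (Finset.mem_range.mp hi)]
  rw [← ext1, Finset.smul_sum, Finset.smul_sum, ← Finset.sum_add_distrib]
  refine Finset.sum_congr rfl fun i _ => ?_
  simp only [Bstep]
  module

lemma step_full (u : SchwartzMap ℝ ℂ) (k : ℕ) (A B : ℕ → ℝ → Mat2)
    (h1 : ∀ x p : ℝ, p ^ 2 ≠ 1 →
      (Rrec (⇑u) k).1 x p = (((p : ℂ) ^ 2 - 1)⁻¹) ^ (k + 1)
        • ∑ i ∈ Finset.range (k + 2), (p : ℂ) ^ i • A i x)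
    (h2 : ∀ x p : ℝ, p ^ 2 ≠ 1 →
      (Rrec (⇑u) k).2 x p = (((p : ℂ) ^ 2 - 1)⁻¹) ^ (k + 1)
        • ∑ i ∈ Finset.range (k + 2), (p : ℂ) ^ i • B i x)
    (h3 : ∀ i : ℕ, ∀ a b : Fin 2,
      (fun x => A i x a b) ∈ Algebra.adjoin ℂ (Sgen (⇑u) (k - 1)) ∧
      (fun x => deriv (fun y => A i y a b) x) ∈ Algebra.adjoin ℂ (Sgen (⇑u) k))
    (h4 : ∀ i : ℕ, ∀ a b : Fin 2, (fun x => B i x a b) ∈ Algebra.adjoin ℂ (Sgen (⇑u) k))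
    (h5 : B (k + 1) = fun _ => 0)
    (h6 : ∃ C : Mat2, (∀ x, A (k + 1) x = C) ∧ (1 ≤ k → C = 0)) :
    (∀ x p : ℝ, p ^ 2 ≠ 1 →
        (Rrec (⇑u) (k + 1)).1 x p
          = (((p : ℂ) ^ 2 - 1)⁻¹) ^ (k + 2)
              • ∑ i ∈ Finset.range (k + 3), (p : ℂ) ^ i • Astep (⇑u) k A B i x) ∧
      (∀ x p : ℝ, p ^ 2 ≠ 1 →
        (Rrec (⇑u) (k + 1)).2 x p
          = (((p : ℂ) ^ 2 - 1)⁻¹) ^ (k + 2)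
              • ∑ i ∈ Finset.range (k + 3), (p : ℂ) ^ i • Bstep (⇑u) k A B i x) ∧
      (∀ i : ℕ, ∀ a b : Fin 2,
        (fun x => Astep (⇑u) k A B i x a b) ∈ Algebra.adjoin ℂ (Sgen (⇑u) k) ∧
        (fun x => deriv (fun y => Astep (⇑u) k A B i y a b) x)
          ∈ Algebra.adjoin ℂ (Sgen (⇑u) (k + 1))) ∧
      (∀ i : ℕ, ∀ a b : Fin 2,
        (fun x => Bstep (⇑u) k A B i x a b) ∈ Algebra.adjoin ℂ (Sgen (⇑u) (k + 1))) ∧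
      (Bstep (⇑u) k A B (k + 2) = fun _ => 0) ∧
      (∃ C : Mat2, (∀ x, Astep (⇑u) k A B (k + 2) x = C) ∧ (1 ≤ k + 1 → C = 0)) := by
  have hAdiff : ∀ i (a b : Fin 2) x, DifferentiableAt ℝ (fun y => A i y a b) x :=
    fun i a b x =>
      ((mem_adjoin_smooth_deriv u (k - 1) (h3 i a b).1).1.differentiable (by simp)) x
  have hBdiff : ∀ i (a b : Fin 2) x, DifferentiableAt ℝ (fun y => B i y a b) x :=
    fun i a b x =>
      ((mem_adjoin_smooth_deriv u k (h4 i a b)).1.differentiable (by simp)) x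
  have hA'ent : ∀ i, ∀ a b : Fin 2,
      (fun x => pdxM (A i) x a b) ∈ Algebra.adjoin ℂ (Sgen (⇑u) k) :=
    fun i a b => (h3 i a b).2
  have hB'ent : ∀ i, ∀ a b : Fin 2,
      (fun x => pdxM (B i) x a b) ∈ Algebra.adjoin ℂ (Sgen (⇑u) (k + 1)) :=
    fun i a b => (mem_adjoin_smooth_deriv u k (h4 i a b)).2
  have hMent : ∀ i, ∀ a b : Fin 2,
      (fun x => Mstep (⇑u) A B i x a b) ∈ Algebra.adjoin ℂ (Sgen (⇑u) k) := by
    intro i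
    exact entry_add
      (entry_smul _ (entry_mul (entry_Umat (⇑u) k) (h4 i)))
      (entry_smul _ (entry_mul (hA'ent i) (fun a b => entry_const sigma3 a b)))
  have hAnewEnt : ∀ i : ℕ, ∀ a b : Fin 2,
      (fun x => Astep (⇑u) k A B i x a b) ∈ Algebra.adjoin ℂ (Sgen (⇑u) k) := by
    intro i
    exact entry_add
      (entry_ite _ (fun a b => entry_const 0 a b)
        (entry_mul (hMent (i - 1)) (fun a b => entry_const sigma3 a b)))
      (entry_ite _ (entry_smul _ (hMent i)) (fun a b => entry_const 0 a b))
  have hMent' : ∀ i, ∀ a b : Fin 2,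
      (fun x => Mstep (⇑u) A B i x a b) ∈ Algebra.adjoin ℂ (Sgen (⇑u) (k + 1)) :=
    fun i a b => adjoin_Sgen_mono (⇑u) (by omega) (hMent i a b)
  refine ⟨step_fst (⇑u) k A B h1 h2 hAdiff, step_snd (⇑u) k A B h1 h2 hAdiff hBdiff,
    ?_, ?_, ?_, ?_⟩
  · intro i a b
    exact ⟨hAnewEnt i a b, (mem_adjoin_smooth_deriv u k (hAnewEnt i a b)).2⟩
  · intro i
    exact entry_smul _
      (entry_add
        (entry_ite _ (entry_mul (entry_Umat (⇑u) (k + 1)) (hMent' i))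
          (fun a b => entry_const 0 a b))
        (entry_add
          (entry_ite _ (fun a b => entry_const 0 a b)
            (entry_mul
              (entry_mul (hB'ent (i - 1)) (fun a b => entry_const sigma3 a b))
              (fun a b => entry_const sigma3 a b)))
          (entry_ite _ (entry_smul _
              (entry_mul (hB'ent i) (fun a b => entry_const sigma3 a b)))
            (fun a b => entry_const 0 a b))))
  · funext x
    have hBtop : pdxM (B (k + 1)) x = 0 := by
      ext a b
      show deriv (fun y => B (k + 1) y a b) x = (0 : Mat2) a b
      have : (fun y => B (k + 1) y a b) = fun _ => (0 : Mat2) a b := by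
        funext y; rw [h5]
      rw [this, deriv_const]
      simp
    show Complex.I • _ = (0 : Mat2)
    rw [if_neg (lt_irrefl (k + 2)), if_neg (Nat.succ_ne_zero (k + 1)),
      if_neg (lt_irrefl (k + 2))]
    have : k + 2 - 1 = k + 1 := rfl
    rw [this, hBtop, zero_mul, zero_mul, zero_add, add_zero, smul_zero]
  · refine ⟨0, ?_, fun _ => rfl⟩
    intro x
    have hA'top : pdxM (A (k + 1)) x = 0 := by
      obtain ⟨C, hC, -⟩ := h6
      ext a b
      show deriv (fun y => A (k + 1) y a b) x = (0 : Mat2) a b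
      have : (fun y => A (k + 1) y a b) = fun _ => C a b := by
        funext y; rw [hC y]
      rw [this, deriv_const]
      simp
    have hMtop : Mstep (⇑u) A B (k + 1) x = 0 := by
      rw [Mstep, h5, hA'top]
      simp
    show Astep (⇑u) k A B (k + 2) x = 0
    rw [Astep, if_neg (Nat.succ_ne_zero (k + 1)), if_neg (lt_irrefl (k + 2))]
    have : k + 2 - 1 = k + 1 := rfl
    rw [this, hMtop, zero_mul, add_zero]

/-! ### The main invariant -/

lemma Rrec_invariant (u : SchwartzMap ℝ ℂ) (k : ℕ) :
    ∃ A B : ℕ → ℝ → Mat2,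
      (∀ x p : ℝ, p ^ 2 ≠ 1 →
        (Rrec (⇑u) k).1 x p
          = (((p : ℂ) ^ 2 - 1)⁻¹) ^ (k + 1)
              • ∑ i ∈ Finset.range (k + 2), (p : ℂ) ^ i • A i x) ∧
      (∀ x p : ℝ, p ^ 2 ≠ 1 →
        (Rrec (⇑u) k).2 x p
          = (((p : ℂ) ^ 2 - 1)⁻¹) ^ (k + 1)
              • ∑ i ∈ Finset.range (k + 2), (p : ℂ) ^ i • B i x) ∧
      (∀ i : ℕ, ∀ a b : Fin 2,
        (fun x => A i x a b) ∈ Algebra.adjoin ℂ (Sgen (⇑u) (k - 1)) ∧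
        (fun x => deriv (fun y => A i y a b) x) ∈ Algebra.adjoin ℂ (Sgen (⇑u) k)) ∧
      (∀ i : ℕ, ∀ a b : Fin 2,
        (fun x => B i x a b) ∈ Algebra.adjoin ℂ (Sgen (⇑u) k)) ∧
      (B (k + 1) = fun _ => 0) ∧
      (∃ C : Mat2, (∀ x, A (k + 1) x = C) ∧ (1 ≤ k → C = 0)) := by
  induction k with
  | zero =>
    refine ⟨fun i => if i = 0 then (fun _ => (1 : Mat2)) else
              if i = 1 then (fun _ => -sigma3) else fun _ => 0,
            fun i => if i = 0 then (fun x => (-Complex.I) • Umat (⇑u) x) else fun _ => 0,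
            ?_, ?_, ?_, ?_, ?_, ?_⟩
    · intro x p _
      rw [Rrec_zero_fst]
      simp only [Finset.sum_range_succ, Finset.sum_range_zero, zero_add, pow_one]
      norm_num
      module
    · intro x p _
      rw [Rrec_zero_snd]
      simp only [Finset.sum_range_succ, Finset.sum_range_zero, zero_add, pow_one]
      norm_num
      module
    · intro i a b
      constructor
      · by_cases h0 : i = 0
        · simp only [h0, if_pos rfl]; exact entry_const 1 a b
        · by_cases h1 : i = 1
          · simp only [if_neg h0, h1, if_pos rfl]; exact entry_const (-sigma3) a b
          · simp only [if_neg h0, if_neg h1]; exact entry_const 0 a b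
      · have hconst : ∃ C : Mat2, (fun y : ℝ =>
            (if i = 0 then (fun _ : ℝ => (1 : Mat2)) else
              if i = 1 then (fun _ : ℝ => -sigma3) else fun _ : ℝ => 0) y) = fun _ => C := by
          by_cases h0 : i = 0
          · exact ⟨1, by simp [h0]⟩
          · by_cases h1 : i = 1
            · exact ⟨-sigma3, by simp [h0, h1]⟩
            · exact ⟨0, by simp [h0, h1]⟩
        obtain ⟨C, hC⟩ := hconst
        have : (fun x : ℝ => deriv (fun y : ℝ =>
            (if i = 0 then (fun _ : ℝ => (1 : Mat2)) else
              if i = 1 then (fun _ : ℝ => -sigma3) else fun _ : ℝ => 0) y a b) x)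
            = fun _ : ℝ => (0 : ℂ) := by
          funext x
          have : (fun y : ℝ =>
              (if i = 0 then (fun _ : ℝ => (1 : Mat2)) else
                if i = 1 then (fun _ : ℝ => -sigma3) else fun _ : ℝ => 0) y a b)
              = fun _ : ℝ => C a b := by
            funext y; rw [congrFun hC y]
          rw [this, deriv_const]
        rw [this]
        exact Subalgebra.zero_mem _
    · intro i a b
      by_cases h0 : i = 0
      · simp only [h0, if_pos rfl]; exact entry_smul (-Complex.I) (entry_Umat (⇑u) 0) a b
      · simp only [if_neg h0]; exact entry_const 0 a b
    · simp
    · exact ⟨-sigma3, fun x => by simp, by omega⟩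
  | succ k ih =>
    obtain ⟨A, B, h1, h2, h3, h4, h5, h6⟩ := ih
    exact ⟨Astep (⇑u) k A B, Bstep (⇑u) k A B,
      (step_full u k A B h1 h2 h3 h4 h5 h6).1,
      (step_full u k A B h1 h2 h3 h4 h5 h6).2.1,
      (step_full u k A B h1 h2 h3 h4 h5 h6).2.2.1,
      (step_full u k A B h1 h2 h3 h4 h5 h6).2.2.2.1,
      (step_full u k A B h1 h2 h3 h4 h5 h6).2.2.2.2.1,
      (step_full u k A B h1 h2 h3 h4 h5 h6).2.2.2.2.2⟩

/-- Lemma 4 of the paper: for `k ≥ 1` the coefficients `R_k^d` and `R_k^a` have the form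
`(p²−1)^{−(k+1)} ∑_{i=0}^{k} A_i(x) p^i`, resp. `(p²−1)^{−(k+1)} ∑_{i=0}^{k} B_i(x) p^i`,
where each entry of each `A_i` lies in the ℂ-subalgebra of functions generated by the
derivatives `∂ₓⁿu, ∂ₓⁿ(conj u)` with `n ≤ k−1`, and each entry of each `B_i` lies in
the ℂ-subalgebra generated by those with `n ≤ k`. -/
theorem Rrec_structure (u : SchwartzMap ℝ ℂ) (k : ℕ) (hk : 1 ≤ k) :
    ∃ A B : ℕ → ℝ → Matrix (Fin 2) (Fin 2) ℂ,
      (∀ x p : ℝ, p ^ 2 ≠ 1 →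
        (Rrec (⇑u) k).1 x p
          = (((p : ℂ) ^ 2 - 1)⁻¹) ^ (k + 1)
              • ∑ i ∈ Finset.range (k + 1), (p : ℂ) ^ i • A i x) ∧
      (∀ x p : ℝ, p ^ 2 ≠ 1 →
        (Rrec (⇑u) k).2 x p
          = (((p : ℂ) ^ 2 - 1)⁻¹) ^ (k + 1)
              • ∑ i ∈ Finset.range (k + 1), (p : ℂ) ^ i • B i x) ∧
      (∀ i ∈ Finset.range (k + 1), ∀ a b : Fin 2,
        (fun x => A i x a b) ∈ Algebra.adjoin ℂ
          {f : ℝ → ℂ | ∃ n : ℕ, n ≤ k - 1 ∧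
            (f = iteratedDeriv n (⇑u) ∨ f = iteratedDeriv n (fun x => (starRingEnd ℂ) (u x)))}) ∧
      (∀ i ∈ Finset.range (k + 1), ∀ a b : Fin 2,
        (fun x => B i x a b) ∈ Algebra.adjoin ℂ
          {f : ℝ → ℂ | ∃ n : ℕ, n ≤ k ∧
            (f = iteratedDeriv n (⇑u) ∨ f = iteratedDeriv n (fun x => (starRingEnd ℂ) (u x)))}) := by
  obtain ⟨A, B, h1, h2, h3, h4, h5, h6⟩ := Rrec_invariant u k
  obtain ⟨C, hC, hC0⟩ := h6
  have hAtop : ∀ x, A (k + 1) x = 0 := by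
    intro x; rw [hC x, hC0 hk]
  refine ⟨A, B, ?_, ?_, fun i _ a b => (h3 i a b).1, fun i _ a b => h4 i a b⟩
  · intro x p hp
    rw [h1 x p hp]
    congr 1
    rw [Finset.sum_range_succ, hAtop x, smul_zero, add_zero]
  · intro x p hp
    rw [h2 x p hp]
    congr 1
    rw [Finset.sum_range_succ, h5, smul_zero, add_zero]
end
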